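/- arXiv:2003.03083 — 8 statements merged into one kernel-verified Lean document; each statement's English description precedes it below -/
import Mathlib

section
/- For every nonnegative initial datum ω₀ = (B(0), N_s(0), N_m(0), N_p(0), N_{m.p}(0)) ∈ ℝ⁵₊ there exists a unique global-in-time solution t ↦ (B(t), N_s(t), N_m(t), N_p(t), N_{m.p}(t)) of the within-host bacterial dynamics system, defined for all t ∈ [0,∞), taking the value ω₀ at t = 0, and all five components of this solution remain nonnegative for all t ≥ 0. -/
open Filter Set Matrix

/-- Parameters of the within-host bacterial dynamics system:
`Lam` = Λ (nutrient inflow), `d` = nutrient washout rate, `ds,dm,dp,dmp` = death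
rates `d_j`, `bs,bm,bp,bmp` = consumption rates `β_j`, `ts,tm,tp,tmp` = conversion
factors `τ_j`, `es,em,ep,emp` = mutation ratios `ε_j`, `th` = segregation ratio θ,
`al` = HGT flux α, and `aH, bH` the Beddington–DeAngelis constants. -/
structure ModelParams where
  Lam : ℝ
  d : ℝ
  ds : ℝ
  dm : ℝ
  dp : ℝ
  dmp : ℝ
  bs : ℝ
  bm : ℝ
  bp : ℝ
  bmp : ℝ
  ts : ℝ
  tm : ℝ
  tp : ℝ
  tmp : ℝ
  es : ℝ
  em : ℝ
  ep : ℝ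
  emp : ℝ
  th : ℝ
  al : ℝ
  aH : ℝ
  bH : ℝ

/-- Right-hand side of the ODE system, with state `x = (B, N_s, N_m, N_p, N_{m.p})`. -/
noncomputable def rhs (p : ModelParams) (x : Fin 5 → ℝ) : Fin 5 → ℝ :=
  ![p.Lam - p.d * x 0 - x 0 * (p.bs * x 1 + p.bm * x 2 + p.bp * x 3 + p.bmp * x 4),
    p.ts * p.bs * (1 - p.es) * x 0 * x 1 - p.ds * x 1 + p.em * p.tm * p.bm * x 0 * x 2
      + p.th * p.tp * p.bp * x 0 * x 3
      - (p.al / (p.aH + p.bH * (x 1 + x 2 + x 3 + x 4))) * x 1 * (x 3 + x 4),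
    p.tm * p.bm * (1 - p.em) * x 0 * x 2 - p.dm * x 2 + p.es * p.ts * p.bs * x 0 * x 1
      + p.th * p.tmp * p.bmp * x 0 * x 4
      - (p.al / (p.aH + p.bH * (x 1 + x 2 + x 3 + x 4))) * x 2 * (x 3 + x 4),
    p.tp * p.bp * (1 - p.th) * (1 - p.ep) * x 0 * x 3 - p.dp * x 3
      + p.emp * (1 - p.th) * p.tmp * p.bmp * x 0 * x 4
      + (p.al / (p.aH + p.bH * (x 1 + x 2 + x 3 + x 4))) * x 1 * (x 3 + x 4),
    p.tmp * p.bmp * (1 - p.th) * (1 - p.emp) * x 0 * x 4 - p.dmp * x 4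
      + p.ep * (1 - p.th) * p.tp * p.bp * x 0 * x 3
      + (p.al / (p.aH + p.bH * (x 1 + x 2 + x 3 + x 4))) * x 2 * (x 3 + x 4)]

/-- Natural hypotheses on the parameters. -/
def ModelParams.Valid (p : ModelParams) : Prop :=
  0 < p.Lam ∧ 0 < p.d ∧ 0 < p.ds ∧ 0 < p.dm ∧ 0 < p.dp ∧ 0 < p.dmp ∧
  0 ≤ p.bs ∧ 0 ≤ p.bm ∧ 0 ≤ p.bp ∧ 0 ≤ p.bmp ∧
  0 ≤ p.ts ∧ 0 ≤ p.tm ∧ 0 ≤ p.tp ∧ 0 ≤ p.tmp ∧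
  p.es ∈ Set.Ioo (0:ℝ) 1 ∧ p.em ∈ Set.Ioo (0:ℝ) 1 ∧ p.ep ∈ Set.Ioo (0:ℝ) 1 ∧
  p.emp ∈ Set.Ioo (0:ℝ) 1 ∧ p.th ∈ Set.Ioo (0:ℝ) 1 ∧
  0 ≤ p.al ∧ 0 ≤ p.aH ∧ 0 ≤ p.bH ∧ 0 < p.aH + p.bH

/-- `x : ℝ → Fin 5 → ℝ` is a global-in-time (for `t ≥ 0`) solution of the system. -/
noncomputable def IsSolution (p : ModelParams) (x : ℝ → Fin 5 → ℝ) : Prop :=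
  ∀ t : ℝ, 0 ≤ t → ∀ i : Fin 5, HasDerivAt (fun s => x s i) (rhs p (x t) i) t

/-!
The vector field is singular outside the nonnegative orthant (for `a_H = 0`, `H(N)` blows up
at `N = 0`), so we first solve the system with the state clamped to a box `[0, R]⁵`. On a box
the polynomial part of the field is smooth and the HGT term `α u m / (a_H + b_H N)` with
`u, m ≤ N` is Lipschitz by a direct estimate, so the clamped field is globally Lipschitz and
bounded and has a solution on all of `ℝ`. Quasi-positivity keeps this solution nonnegative.
Growth, mutation, segregation and HGT only redistribute bacteria, so
`mass = τ B + Σ N_j`, with `τ` dominating every conversion factor `τ_j`, satisfies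
`mass' ≤ τ Λ - min(d, d_j) mass`. Hence the solution never leaves the box
`[0, massBound]⁵`, on which clamping does nothing, and it solves the original system. Every
nonnegative solution obeys the same bound, and uniqueness follows from the Lipschitz estimate
on that box.
-/

open scoped NNReal Topology

theorem image_le_of_hasDerivAt_nonpos_above {f f' : ℝ → ℝ} {a b M : ℝ}
    (hf : ∀ t ∈ Icc a b, HasDerivAt f (f' t) t) (ha : f a ≤ M)
    (hM : ∀ t ∈ Icc a b, M ≤ f t → f' t ≤ 0) : ∀ t ∈ Icc a b, f t ≤ M := by
  intro t ht
  have hta : 0 < t - a + 1 := by linarith [ht.1]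
  -- compare `f` with the strictly increasing barriers `M + δ (s - a + 1)`
  have key : ∀ δ > 0, f t ≤ M + δ * (t - a + 1) := fun δ hδ =>
    image_le_of_deriv_right_lt_deriv_boundary (B := fun s => M + δ * (s - a + 1))
      (HasDerivAt.continuousOn hf) (fun s hs => (hf s (Ico_subset_Icc_self hs)).hasDerivWithinAt)
      (by linarith)
      (fun s => by
        simpa using ((((hasDerivAt_id s).sub_const a).add_const 1).const_mul δ).const_add M)
      (fun s hs hfs => (hM s (Ico_subset_Icc_self hs) (by nlinarith [hs.1])).trans_lt hδ) ht
  refine le_of_forall_pos_le_add fun ε hε => ?_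
  simpa [div_mul_cancel₀ _ hta.ne'] using key (ε / (t - a + 1)) (div_pos hε hta)

theorem lipschitzOnWith_pi {α ι : Type*} [PseudoEMetricSpace α] [Fintype ι] {π : ι → Type*}
    [∀ i, PseudoEMetricSpace (π i)] {f : α → ∀ i, π i} {s : Set α} {K : ℝ≥0}
    (h : ∀ i, LipschitzOnWith K (fun x => f x i) s) : LipschitzOnWith K f s :=
  fun _ hx _ hy => edist_pi_le_iff.2 fun i => h i hx hy

section ODE

variable {E : Type*} [NormedAddCommGroup E] [NormedSpace ℝ E] [CompleteSpace E] {v : E → E}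
  {K C : ℝ≥0}

theorem exists_forall_mem_Ioo_hasDerivAt_of_lipschitzWith (hv : LipschitzWith K v)
    (hC : ∀ x, ‖v x‖ ≤ C) (x₀ : E) (T : ℝ≥0) :
    ∃ f : ℝ → E, f 0 = x₀ ∧ ∀ t ∈ Ioo (-T : ℝ) T, HasDerivAt f (v (f t)) t := by
  have hpl : IsPicardLindelof (fun _ => v) (tmin := -T) (tmax := T) ⟨0, by simp⟩
      x₀ (C * T) 0 C K :=
    .of_time_independent (fun x _ => hC x) hv.lipschitzOnWith (by simp)
  obtain ⟨f, hf0, hf⟩ := hpl.exists_eq_forall_mem_Icc_hasDerivWithinAt₀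
  exact ⟨f, hf0, fun t ht =>
    (hf t (Ioo_subset_Icc_self ht)).hasDerivAt (Icc_mem_nhds ht.1 ht.2)⟩

theorem eventuallyEq_natFloor_abs {α : Type*} {F : ℕ → ℝ → α}
    (hF : ∀ m n, m ≤ n → EqOn (F m) (F n) (Ioo (-((m : ℝ) + 1)) (m + 1))) (t : ℝ) :
    (fun s => F ⌊|s|⌋₊ s) =ᶠ[𝓝 t] F ⌊|t|⌋₊ := by
  have ht := abs_lt.1 (Nat.lt_floor_add_one |t|)
  filter_upwards [Ioo_mem_nhds ht.1 ht.2] with s hs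
  have hs' : ⌊|s|⌋₊ < ⌊|t|⌋₊ + 1 := by
    rw [Nat.floor_lt (abs_nonneg s)]; exact_mod_cast abs_lt.2 hs
  exact hF _ _ (Nat.le_of_lt_succ hs') (abs_lt.1 (Nat.lt_floor_add_one |s|))

theorem exists_forall_hasDerivAt_of_lipschitzWith (hv : LipschitzWith K v)
    (hC : ∀ x, ‖v x‖ ≤ C) (x₀ : E) :
    ∃ f : ℝ → E, f 0 = x₀ ∧ ∀ t, HasDerivAt f (v (f t)) t := by
  choose F hF0 hF using fun n : ℕ =>
    exists_forall_mem_Ioo_hasDerivAt_of_lipschitzWith hv hC x₀ (n + 1)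
  push_cast at hF
  have hagree : ∀ m n, m ≤ n → EqOn (F m) (F n) (Ioo (-((m : ℝ) + 1)) (m + 1)) := by
    intro m n hmn
    have hsub : Ioo (-((m : ℝ) + 1)) (m + 1) ⊆ Ioo (-((n : ℝ) + 1)) (n + 1) := by
      have : (m : ℝ) ≤ n := by exact_mod_cast hmn
      exact Ioo_subset_Ioo (by linarith) (by linarith)
    exact ODE_solution_unique_of_mem_Ioo (v := fun _ => v) (s := fun _ => univ)
      (fun _ _ => hv.lipschitzOnWith) ⟨by linarith, by linarith⟩
      (fun t ht => ⟨hF m t ht, trivial⟩) (fun t ht => ⟨hF n t (hsub ht), trivial⟩)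
      ((hF0 m).trans (hF0 n).symm)
  refine ⟨fun s => F ⌊|s|⌋₊ s, by simpa using hF0 0, fun t => ?_⟩
  exact (hF _ t (abs_lt.1 (Nat.lt_floor_add_one |t|))).congr_of_eventuallyEq
    (eventuallyEq_natFloor_abs hagree t)

end ODE

theorem div_le_max_one_div {a b m N L : ℝ} (ha : 0 ≤ a) (hb : 0 ≤ b) (hab : 0 < a + b)
    (hm : 0 ≤ m) (hmN : m ≤ N) (hNL : N ≤ L) : m / (a + b * N) ≤ max 1 L / (a + b) := by
  have h1 : 1 ≤ max 1 L := le_max_left _ _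
  have hL : L ≤ max 1 L := le_max_right _ _
  have hN : 0 ≤ N := hm.trans hmN
  rcases (by positivity : 0 ≤ a + b * N).eq_or_lt with hD | hD
  · rw [← hD, div_zero]; exact div_nonneg (zero_le_one.trans h1) hab.le
  rw [div_le_div_iff₀ hD hab]
  nlinarith [mul_le_mul_of_nonneg_left (hmN.trans hNL |>.trans hL) ha,
    mul_le_mul_of_nonneg_left hmN hb, mul_le_mul_of_nonneg_left h1 (mul_nonneg hb hN)]

theorem abs_mul_div_sub_mul_div_le {a b L u m N v w N' : ℝ} (ha : 0 ≤ a) (hb : 0 ≤ b)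
    (hab : 0 < a + b) (hu : u ∈ Icc 0 N) (hm : m ∈ Icc 0 N) (hN : N ≤ L)
    (hv : v ∈ Icc 0 N') (hw : w ∈ Icc 0 N') (hN' : N' ≤ L) :
    |u * m / (a + b * N) - v * w / (a + b * N')|
      ≤ max 1 L / (a + b) * (|u - v| + |m - w| + |N - N'|) := by
  wlog hDD : a + b * N' ≤ a + b * N generalizing u m N v w N'
  · have := this hv hw hN' hu hm hN (le_of_not_ge hDD)
    rwa [abs_sub_comm, abs_sub_comm v, abs_sub_comm w, abs_sub_comm N'] at this
  set M := max 1 L / (a + b)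
  have hmD : m / (a + b * N) ≤ M := div_le_max_one_div ha hb hab hm.1 hm.2 hN
  have hvD : v / (a + b * N') ≤ M := div_le_max_one_div ha hb hab hv.1 hv.2 hN'
  have hM : 0 ≤ M := div_nonneg (le_max_of_le_left zero_le_one) hab.le
  rcases (by nlinarith [hv.1, hv.2] : 0 ≤ a + b * N').eq_or_lt with hD' | hD'
  · -- `a + b N' = 0` forces `N' = 0`, and the second quotient is the junk value `v * w / 0 = 0`
    have hN'0 : N' = 0 := by
      rcases hb.eq_or_lt with hb0 | hb0
      · subst hb0; linarith
      · nlinarith [hv.1, hv.2]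
    have hmD0 : 0 ≤ m / (a + b * N) := div_nonneg hm.1 (hD'.le.trans hDD)
    have hu' : u ≤ |N - N'| := by rw [hN'0, sub_zero, abs_of_nonneg (hu.1.trans hu.2)]; exact hu.2
    rw [← hD', div_zero, sub_zero, mul_div_assoc, abs_of_nonneg (mul_nonneg hu.1 hmD0)]
    nlinarith [abs_nonneg (u - v), abs_nonneg (m - w), mul_le_mul hu' hmD hmD0 (abs_nonneg _)]
  have hD : 0 < a + b * N := hD'.trans_le hDD
  have key : u * m / (a + b * N) - v * w / (a + b * N')
      = (u - v) * (m / (a + b * N))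
        + v / (a + b * N') * ((m - w) * ((a + b * N') / (a + b * N)))
        + v / (a + b * N') * (w * b / (a + b * N)) * (N' - N) := by
    field_simp; ring
  have hratio : (a + b * N') / (a + b * N) ≤ 1 := (div_le_one hD).2 hDD
  have hwb : w * b / (a + b * N) ≤ 1 := by
    rw [div_le_one hD]; nlinarith [hw.1, hw.2]
  have hv0 : 0 ≤ v / (a + b * N') := div_nonneg hv.1 hD'.le
  rw [key]
  refine (abs_add_three _ _ _).trans ?_
  simp only [abs_mul, abs_of_nonneg hv0, abs_of_nonneg (div_nonneg hm.1 hD.le),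
    abs_of_nonneg (div_nonneg hD'.le hD.le),
    abs_of_nonneg (div_nonneg (mul_nonneg hw.1 hb) hD.le), abs_sub_comm N' N]
  rw [mul_add, mul_add]
  gcongr ?_ + ?_ + ?_
  · rw [mul_comm M]; exact mul_le_mul_of_nonneg_left hmD (abs_nonneg _)
  · exact mul_le_mul hvD (mul_le_of_le_one_right (abs_nonneg _) hratio)
      (mul_nonneg (abs_nonneg _) (div_nonneg hD'.le hD.le)) hM
  · exact mul_le_mul_of_nonneg_right
      (mul_le_of_le_one_right hv0 hwb |>.trans hvD) (abs_nonneg _)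

section Clamp

variable {ι : Type*}

def clamp (R : ℝ) (x : ι → ℝ) : ι → ℝ := fun i => min (max (x i) 0) R

theorem clamp_mem_Icc {R : ℝ} (hR : 0 ≤ R) (x : ι → ℝ) : clamp R x ∈ Icc 0 fun _ => R :=
  ⟨fun _ => le_min (le_max_right _ _) hR, fun _ => min_le_right _ _⟩

theorem clamp_eq_self {R : ℝ} {x : ι → ℝ} (hx : x ∈ Icc 0 fun _ => R) : clamp R x = x :=
  funext fun i => by
    have h0 : 0 ≤ x i := hx.1 i
    rw [clamp, max_eq_left h0, min_eq_left (hx.2 i)]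

theorem clamp_apply_of_nonpos {R : ℝ} (hR : 0 ≤ R) {x : ι → ℝ} {i : ι} (hx : x i ≤ 0) :
    clamp R x i = 0 := by
  simp [clamp, max_eq_right hx, hR]

theorem clamp_apply_of_le {R : ℝ} (hR : 0 ≤ R) {x : ι → ℝ} {i : ι} (hx : R ≤ x i) :
    clamp R x i = R := by
  simp [clamp, max_eq_left (hR.trans hx), hx]

theorem lipschitzWith_clamp [Fintype ι] (R : ℝ) : LipschitzWith 1 (clamp (ι := ι) R) :=
  lipschitzOnWith_univ.1 <| lipschitzOnWith_pi fun i =>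
    (((LipschitzWith.eval i).max_const 0).min_const R).lipschitzOnWith

end Clamp

namespace ModelParams

/-- The `1 +` makes `B` itself bounded by `mass`. -/
def tau (p : ModelParams) : ℝ := 1 + p.ts + p.tm + p.tp + p.tmp

def minDeath (p : ModelParams) : ℝ := min p.d (min p.ds (min p.dm (min p.dp p.dmp)))

theorem Valid.minDeath_pos {p : ModelParams} (hp : p.Valid) : 0 < p.minDeath := by
  obtain ⟨-, hd, hds, hdm, hdp, hdmp, -⟩ := hp
  simp only [minDeath, lt_min_iff]
  exact ⟨hd, hds, hdm, hdp, hdmp⟩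

theorem Valid.one_le_tau {p : ModelParams} (hp : p.Valid) : 1 ≤ p.tau := by
  obtain ⟨-, -, -, -, -, -, -, -, -, -, hts, htm, htp, htmp, -⟩ := hp
  simp only [tau]; linarith

end ModelParams

open ModelParams

def mass (p : ModelParams) (x : Fin 5 → ℝ) : ℝ := p.tau * x 0 + x 1 + x 2 + x 3 + x 4

noncomputable def massBound (p : ModelParams) (ω : Fin 5 → ℝ) : ℝ :=
  max (mass p ω) (p.tau * p.Lam / p.minDeath)

/-- The HGT term `H(N) N_k (N_p + N_{m.p})`. -/
noncomputable def hgtFlux (p : ModelParams) (k : Fin 5) (x : Fin 5 → ℝ) : ℝ :=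
  p.al / (p.aH + p.bH * (x 1 + x 2 + x 3 + x 4)) * x k * (x 3 + x 4)

noncomputable def hgt (p : ModelParams) (x : Fin 5 → ℝ) : Fin 5 → ℝ :=
  ![0, -hgtFlux p 1 x, -hgtFlux p 2 x, hgtFlux p 1 x, hgtFlux p 2 x]

theorem contDiff_rhs_sub_hgt (p : ModelParams) : ContDiff ℝ 1 (rhs p - hgt p) := by
  refine contDiff_pi.2 fun i => ?_
  fin_cases i <;> simp [rhs, hgt, hgtFlux] <;> fun_prop

variable {p : ModelParams}

theorem exists_lipschitzOnWith_hgtFlux (hp : p.Valid) (R : ℝ) :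
    ∃ K, ∀ k ≠ 0, LipschitzOnWith K (hgtFlux p k) (Icc 0 fun _ => R) := by
  obtain ⟨-, -, -, -, -, -, -, -, -, -, -, -, -, -, -, -, -, -, -, hal, haH, hbH, hab⟩ := hp
  set M := max 1 (4 * R) / (p.aH + p.bH)
  have hM : 0 ≤ M := div_nonneg (le_max_of_le_left zero_le_one) hab.le
  have hbox : ∀ k ≠ 0, ∀ z ∈ (Icc 0 fun _ => R : Set (Fin 5 → ℝ)),
      z k ∈ Icc 0 (z 1 + z 2 + z 3 + z 4) ∧ z 3 + z 4 ∈ Icc 0 (z 1 + z 2 + z 3 + z 4) ∧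
        z 1 + z 2 + z 3 + z 4 ≤ 4 * R := by
    intro k hk z hz
    have h : ∀ i, 0 ≤ z i ∧ z i ≤ R := fun i => ⟨hz.1 i, hz.2 i⟩
    obtain ⟨h1, h1'⟩ := h 1; obtain ⟨h2, h2'⟩ := h 2
    obtain ⟨h3, h3'⟩ := h 3; obtain ⟨h4, h4'⟩ := h 4
    refine ⟨?_, ⟨by linarith, by linarith⟩, by linarith⟩
    fin_cases k
    · exact absurd rfl hk
    all_goals exact ⟨by simp; linarith, by simp; linarith⟩
  refine ⟨(7 * p.al * M).toNNReal, fun k hk =>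
    LipschitzOnWith.of_dist_le_mul fun x hx y hy => ?_⟩
  obtain ⟨hxk, hxm, hxN⟩ := hbox k hk x hx
  obtain ⟨hyk, hym, hyN⟩ := hbox k hk y hy
  have hd : ∀ i, |x i - y i| ≤ dist x y := fun i => by
    rw [← Real.dist_eq]; exact dist_le_pi_dist x y i
  obtain ⟨l1, u1⟩ := abs_le.1 (hd 1); obtain ⟨l2, u2⟩ := abs_le.1 (hd 2)
  obtain ⟨l3, u3⟩ := abs_le.1 (hd 3); obtain ⟨l4, u4⟩ := abs_le.1 (hd 4)
  have hm : |(x 3 + x 4) - (y 3 + y 4)| ≤ 2 * dist x y := abs_le.2 ⟨by linarith, by linarith⟩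
  have hN : |(x 1 + x 2 + x 3 + x 4) - (y 1 + y 2 + y 3 + y 4)| ≤ 4 * dist x y :=
    abs_le.2 ⟨by linarith, by linarith⟩
  rw [Real.dist_eq, Real.coe_toNNReal _ (by positivity)]
  calc |hgtFlux p k x - hgtFlux p k y|
      = p.al * |x k * (x 3 + x 4) / (p.aH + p.bH * (x 1 + x 2 + x 3 + x 4))
          - y k * (y 3 + y 4) / (p.aH + p.bH * (y 1 + y 2 + y 3 + y 4))| := by
        rw [← abs_of_nonneg hal, ← abs_mul]; congr 1; simp only [hgtFlux]; ring
    _ ≤ p.al * (M * (|x k - y k| + |(x 3 + x 4) - (y 3 + y 4)|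
          + |(x 1 + x 2 + x 3 + x 4) - (y 1 + y 2 + y 3 + y 4)|)) :=
        mul_le_mul_of_nonneg_left
          (abs_mul_div_sub_mul_div_le haH hbH hab hxk hxm hxN hyk hym hyN) hal
    _ ≤ p.al * (M * (dist x y + 2 * dist x y + 4 * dist x y)) := by gcongr; exact hd k
    _ = 7 * p.al * M * dist x y := by ring

theorem exists_lipschitzOnWith_hgt (hp : p.Valid) (R : ℝ) :
    ∃ K, LipschitzOnWith K (hgt p) (Icc 0 fun _ => R) := by
  obtain ⟨K, hK⟩ := exists_lipschitzOnWith_hgtFlux hp R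
  refine ⟨K, lipschitzOnWith_pi fun i => ?_⟩
  fin_cases i
  · exact (LipschitzWith.const' (0 : ℝ)).lipschitzOnWith.weaken zero_le
  · exact (hK 1 (by decide)).neg
  · exact (hK 2 (by decide)).neg
  · exact hK 1 (by decide)
  · exact hK 2 (by decide)

theorem exists_lipschitzOnWith_rhs (hp : p.Valid) (R : ℝ) :
    ∃ K, LipschitzOnWith K (rhs p) (Icc 0 fun _ => R) := by
  obtain ⟨K₁, h₁⟩ := (contDiff_rhs_sub_hgt p).contDiffOn.exists_lipschitzOnWith one_ne_zero
    (convex_Icc _ _) isCompact_Icc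
  obtain ⟨K₂, h₂⟩ := exists_lipschitzOnWith_hgt hp R
  exact ⟨K₁ + K₂, by simpa using h₁.add h₂⟩

theorem exists_lipschitzWith_norm_le_rhs_clamp (hp : p.Valid) {R : ℝ} (hR : 0 ≤ R) :
    ∃ K C : ℝ≥0, LipschitzWith K (fun x => rhs p (clamp R x)) ∧
      ∀ x, ‖rhs p (clamp R x)‖ ≤ C := by
  obtain ⟨K, hK⟩ := exists_lipschitzOnWith_rhs hp R
  obtain ⟨C, hC⟩ := isCompact_Icc.exists_bound_of_continuousOn hK.continuousOn
  exact ⟨K * 1, C.toNNReal, lipschitzOnWith_univ.1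
    (hK.comp (lipschitzWith_clamp R).lipschitzOnWith fun x _ => clamp_mem_Icc hR x),
    fun x => (hC _ (clamp_mem_Icc hR x)).trans (Real.le_coe_toNNReal C)⟩

theorem rhs_nonneg_of_eq_zero (hp : p.Valid) {x : Fin 5 → ℝ} (hx : 0 ≤ x) {i : Fin 5}
    (hi : x i = 0) : 0 ≤ rhs p x i := by
  obtain ⟨hLam, -, -, -, -, -, hbs, hbm, hbp, hbmp, hts, htm, htp, htmp,
    hes, hem, hep, hemp, hth, hal, haH, hbH, -⟩ := hp
  have hx' : ∀ j, 0 ≤ x j := hx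
  have := hx' 0; have := hx' 1; have := hx' 2; have := hx' 3; have := hx' 4
  have := hes.1.le; have := hem.1.le; have := hep.1.le; have := hemp.1.le; have := hth.1.le
  have : 0 ≤ 1 - p.th := sub_nonneg.2 hth.2.le
  fin_cases i <;> simp [rhs, hi] at hi ⊢ <;> positivity

theorem mass_rhs_le (hp : p.Valid) {x : Fin 5 → ℝ} (hx : 0 ≤ x) :
    mass p (rhs p x) ≤ p.tau * p.Lam - p.minDeath * mass p x := by
  obtain ⟨-, -, -, -, -, -, hbs, hbm, hbp, hbmp, hts, htm, htp, htmp, -⟩ := hp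
  have key : mass p (rhs p x) = p.tau * p.Lam - p.tau * p.d * x 0
      - (p.ds * x 1 + p.dm * x 2 + p.dp * x 3 + p.dmp * x 4)
      - x 0 * ((p.tau - p.ts) * p.bs * x 1 + (p.tau - p.tm) * p.bm * x 2
        + (p.tau - p.tp) * p.bp * x 3 + (p.tau - p.tmp) * p.bmp * x 4) := by
    simp [mass, rhs, tau]; ring
  have hx' : ∀ j, 0 ≤ x j := hx
  have := hx' 0; have := hx' 1; have := hx' 2; have := hx' 3; have := hx' 4
  have : 0 ≤ p.tau - p.ts := by simp only [tau]; linarith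
  have : 0 ≤ p.tau - p.tm := by simp only [tau]; linarith
  have : 0 ≤ p.tau - p.tp := by simp only [tau]; linarith
  have : 0 ≤ p.tau - p.tmp := by simp only [tau]; linarith
  have htau : 0 ≤ p.tau := by simp only [tau]; linarith
  have hcons : 0 ≤ x 0 * ((p.tau - p.ts) * p.bs * x 1 + (p.tau - p.tm) * p.bm * x 2
      + (p.tau - p.tp) * p.bp * x 3 + (p.tau - p.tmp) * p.bmp * x 4) := by positivity
  obtain ⟨hc0, hc1, hc2, hc3, hc4⟩ : p.minDeath ≤ p.d ∧ p.minDeath ≤ p.ds ∧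
      p.minDeath ≤ p.dm ∧ p.minDeath ≤ p.dp ∧ p.minDeath ≤ p.dmp := by
    simp only [minDeath, min_le_iff, le_refl, true_or, or_true, and_self]
  rw [key, mass]
  linarith [mul_le_mul_of_nonneg_right hc0 (mul_nonneg htau (hx' 0)),
    mul_le_mul_of_nonneg_right hc1 (hx' 1), mul_le_mul_of_nonneg_right hc2 (hx' 2),
    mul_le_mul_of_nonneg_right hc3 (hx' 3), mul_le_mul_of_nonneg_right hc4 (hx' 4)]

theorem le_mass (hp : p.Valid) {x : Fin 5 → ℝ} (hx : 0 ≤ x) (i : Fin 5) :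
    x i ≤ mass p x := by
  have hx' : ∀ j, 0 ≤ x j := hx
  have := hx' 0; have := hx' 1; have := hx' 2; have := hx' 3; have := hx' 4
  have : x 0 ≤ p.tau * x 0 := le_mul_of_one_le_left (hx' 0) hp.one_le_tau
  fin_cases i <;> simp [mass] <;> linarith

theorem min_mass_le_mass_clamp (hp : p.Valid) {R : ℝ} (hR : 0 ≤ R) {x : Fin 5 → ℝ}
    (hx : 0 ≤ x) : min (mass p x) R ≤ mass p (clamp R x) := by
  by_cases h : x ∈ Icc 0 fun _ => R
  · rw [clamp_eq_self h]; exact min_le_left _ _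
  · obtain ⟨i, hi⟩ : ∃ i, R < x i := by simpa [hx, Pi.le_def] using h
    calc min (mass p x) R ≤ clamp R x i :=
          (min_le_right _ _).trans_eq (clamp_apply_of_le hR hi.le).symm
      _ ≤ mass p (clamp R x) := le_mass hp (clamp_mem_Icc hR x).1 i

theorem massBound_nonneg (hp : p.Valid) {ω : Fin 5 → ℝ} (hω : 0 ≤ ω) :
    0 ≤ massBound p ω :=
  (hω 0).trans <| (le_mass hp hω 0).trans (le_max_left _ _)

theorem hasDerivAt_mass {f : ℝ → Fin 5 → ℝ} {f' : Fin 5 → ℝ} {t : ℝ}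
    (hf : HasDerivAt f f' t) : HasDerivAt (fun s => mass p (f s)) (mass p f') t := by
  have h := hasDerivAt_pi.1 hf
  exact (((((h 0).const_mul p.tau).add (h 1)).add (h 2)).add (h 3)).add (h 4)

theorem mem_Icc_massBound_of_hasDerivAt_clamp (hp : p.Valid) {f : ℝ → Fin 5 → ℝ} {R b : ℝ}
    (h0 : 0 ≤ f 0) (hR : massBound p (f 0) ≤ R)
    (hf : ∀ t ∈ Icc 0 b, HasDerivAt f (rhs p (clamp R (f t))) t) :
    ∀ t ∈ Icc 0 b, f t ∈ Icc 0 fun _ => massBound p (f 0) := by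
  set M := massBound p (f 0)
  have hc := hp.minDeath_pos
  have hΛ : p.tau * p.Lam ≤ p.minDeath * M := by
    rw [← div_le_iff₀' hc]; exact le_max_right _ _
  have hR0 : 0 ≤ R := (massBound_nonneg hp h0).trans hR
  have hnonneg : ∀ t ∈ Icc 0 b, 0 ≤ f t := fun t ht i => by
    have := image_le_of_hasDerivAt_nonpos_above (f := fun s => -f s i)
      (fun s hs => (hasDerivAt_pi.1 (hf s hs) i).neg) (by simpa using h0 i)
      (fun s _ hs => neg_nonpos.2 (rhs_nonneg_of_eq_zero hp (clamp_mem_Icc hR0 _).1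
        (clamp_apply_of_nonpos hR0 (neg_nonneg.1 hs)))) t ht
    simpa using this
  have hmass : ∀ t ∈ Icc 0 b, mass p (f t) ≤ M :=
    image_le_of_hasDerivAt_nonpos_above (fun s hs => hasDerivAt_mass (hf s hs)) (le_max_left _ _)
      fun s hs hMs => by
        have hu : M ≤ mass p (clamp R (f s)) :=
          (le_min hMs hR).trans (min_mass_le_mass_clamp hp hR0 (hnonneg s hs))
        have := mass_rhs_le hp (clamp_mem_Icc hR0 (f s)).1
        have := mul_le_mul_of_nonneg_left hu hc.le
        linarith
  exact fun t ht => ⟨hnonneg t ht, fun i => (le_mass hp (hnonneg t ht) i).trans (hmass t ht)⟩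

theorem mem_Icc_massBound_of_hasDerivAt (hp : p.Valid) {f : ℝ → Fin 5 → ℝ} {b : ℝ}
    (hf : ∀ t ∈ Icc 0 b, HasDerivAt f (rhs p (f t)) t) (hnn : ∀ t ∈ Icc 0 b, 0 ≤ f t) :
    ∀ t ∈ Icc 0 b, f t ∈ Icc 0 fun _ => massBound p (f 0) := by
  intro t ht
  obtain ⟨C, hC⟩ := isCompact_Icc.exists_bound_of_continuousOn (HasDerivAt.continuousOn hf)
  -- on `[0, b]` the solution lies in some box, where it also solves the clamped system
  have hbox : ∀ s ∈ Icc 0 b, f s ∈ Icc 0 fun _ => max C (massBound p (f 0)) := fun s hs =>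
    ⟨hnn s hs, fun i => (Real.le_norm_self _).trans <| (norm_le_pi_norm _ i).trans <|
      (hC s hs).trans (le_max_left _ _)⟩
  refine mem_Icc_massBound_of_hasDerivAt_clamp hp (hnn 0 ⟨le_rfl, ht.1.trans ht.2⟩)
    (le_max_right C _) (fun s hs => ?_) t ht
  rw [clamp_eq_self (hbox s hs)]
  exact hf s hs

theorem eqOn_of_hasDerivAt_of_mem_Icc (hp : p.Valid) {f g : ℝ → Fin 5 → ℝ} {R b : ℝ}
    (hf : ∀ t ∈ Icc 0 b, HasDerivAt f (rhs p (f t)) t ∧ f t ∈ Icc 0 fun _ => R)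
    (hg : ∀ t ∈ Icc 0 b, HasDerivAt g (rhs p (g t)) t ∧ g t ∈ Icc 0 fun _ => R)
    (h0 : f 0 = g 0) : EqOn f g (Icc 0 b) := by
  obtain ⟨K, hK⟩ := exists_lipschitzOnWith_rhs hp R
  exact ODE_solution_unique_of_mem_Icc_right (v := fun _ => rhs p) (fun _ _ => hK)
    (HasDerivAt.continuousOn fun t ht => (hf t ht).1)
    (fun t ht => (hf t (Ico_subset_Icc_self ht)).1.hasDerivWithinAt)
    (fun t ht => (hf t (Ico_subset_Icc_self ht)).2)
    (HasDerivAt.continuousOn fun t ht => (hg t ht).1)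
    (fun t ht => (hg t (Ico_subset_Icc_self ht)).1.hasDerivWithinAt)
    (fun t ht => (hg t (Ico_subset_Icc_self ht)).2) h0

/-- For every nonnegative initial datum ω₀ ∈ ℝ⁵₊ there is a unique
global-in-time nonnegative solution of the within-host bacterial dynamics system
taking the value ω₀ at `t = 0`. -/
theorem exists_unique_global_nonneg_solution
    (p : ModelParams) (hp : p.Valid) (ω : Fin 5 → ℝ) (hω : ∀ i, 0 ≤ ω i) :
    ∃ x : ℝ → Fin 5 → ℝ,
      (IsSolution p x ∧ x 0 = ω ∧ ∀ t : ℝ, 0 ≤ t → ∀ i, 0 ≤ x t i) ∧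
      (∀ y : ℝ → Fin 5 → ℝ,
        IsSolution p y → y 0 = ω → (∀ t : ℝ, 0 ≤ t → ∀ i, 0 ≤ y t i) →
        ∀ t : ℝ, 0 ≤ t → y t = x t) := by
  obtain ⟨K, C, hK, hC⟩ := exists_lipschitzWith_norm_le_rhs_clamp hp (massBound_nonneg hp hω)
  obtain ⟨x, hx0, hx⟩ := exists_forall_hasDerivAt_of_lipschitzWith hK hC ω
  have hxbox : ∀ t, 0 ≤ t → x t ∈ Icc 0 fun _ => massBound p ω := fun t ht => by
    have h := mem_Icc_massBound_of_hasDerivAt_clamp hp (hx0 ▸ hω) (hx0 ▸ le_rfl)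
      (fun s _ => hx s) t ⟨ht, le_rfl⟩
    rwa [hx0] at h
  have hxsol : ∀ t, 0 ≤ t → HasDerivAt x (rhs p (x t)) t := fun t ht => by
    simpa only [clamp_eq_self (hxbox t ht)] using hx t
  refine ⟨x, ⟨fun t ht => hasDerivAt_pi.1 (hxsol t ht), hx0, fun t ht => (hxbox t ht).1⟩,
    fun y hy hy0 hynn t ht => ?_⟩
  have hy' : ∀ s ∈ Icc 0 t, HasDerivAt y (rhs p (y s)) s := fun s hs =>
    hasDerivAt_pi.2 (hy s hs.1)
  have hybox := mem_Icc_massBound_of_hasDerivAt hp hy' fun s hs => hynn s hs.1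
  rw [hy0] at hybox
  exact eqOn_of_hasDerivAt_of_mem_Icc hp (fun s hs => ⟨hy' s hs, hybox s hs⟩)
    (fun s hs => ⟨hxsol s hs.1, hxbox s hs.1⟩) (hy0.trans hx0.symm) ⟨ht, le_rfl⟩
end

section
/- Let τ_max = max_{j∈J} τ_j, d_min = min_{j∈J} d_j and K = Λτ_max / min(d, d_min). If the nonnegative initial datum satisfies τ_max·B(0) + N_s(0)+N_m(0)+N_p(0)+N_{m.p}(0) ≤ K, then every nonnegative solution of the within-host bacterial dynamics system satisfies τ_max·B(t) + N_s(t)+N_m(t)+N_p(t)+N_{m.p}(t) ≤ K for all t ≥ 0. -/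
open Filter Set Matrix

/-- With `τmax = max_j τ_j`, `dmin = min_j d_j` and
`K = Λ τmax / min(d, dmin)`, the region `{τmax·B + N_s+N_m+N_p+N_{m.p} ≤ K}` is
positively invariant for nonnegative solutions. -/
theorem bound_invariant
    (p : ModelParams) (hp : p.Valid)
    (τmax dmin K : ℝ)
    (hτmax : τmax = max (max p.ts p.tm) (max p.tp p.tmp))
    (hdmin : dmin = min (min p.ds p.dm) (min p.dp p.dmp))
    (hK : K = p.Lam * τmax / min p.d dmin)
    (x : ℝ → Fin 5 → ℝ) (hx : IsSolution p x)
    (hnn : ∀ t : ℝ, 0 ≤ t → ∀ i, 0 ≤ x t i)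
    (h0 : τmax * x 0 0 + (x 0 1 + x 0 2 + x 0 3 + x 0 4) ≤ K) :
    ∀ t : ℝ, 0 ≤ t → τmax * x t 0 + (x t 1 + x t 2 + x t 3 + x t 4) ≤ K := by
  obtain ⟨hΛ, hd, hds, hdm, hdp, hdmp, hbs, hbm, hbp, hbmp, hts0, htm0, htp0, htmp0,
    hes, hem, hep, hemp, hth, hal, haH, hbH, habH⟩ := hp
  have hts : p.ts ≤ τmax := by rw [hτmax]; exact le_max_of_le_left (le_max_left _ _)
  have htm : p.tm ≤ τmax := by rw [hτmax]; exact le_max_of_le_left (le_max_right _ _)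
  have htp : p.tp ≤ τmax := by rw [hτmax]; exact le_max_of_le_right (le_max_left _ _)
  have htmp : p.tmp ≤ τmax := by rw [hτmax]; exact le_max_of_le_right (le_max_right _ _)
  have hτ : 0 ≤ τmax := le_trans hts0 hts
  have hdminpos : 0 < dmin := by rw [hdmin]; exact lt_min (lt_min hds hdm) (lt_min hdp hdmp)
  set c : ℝ := min p.d dmin with hc_def
  have hc : 0 < c := lt_min hd hdminpos
  have hcd : c ≤ p.d := min_le_left _ _
  have hcds : c ≤ p.ds := le_trans (min_le_right _ _)
    (by rw [hdmin]; exact le_trans (min_le_left _ _) (min_le_left _ _))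
  have hcdm : c ≤ p.dm := le_trans (min_le_right _ _)
    (by rw [hdmin]; exact le_trans (min_le_left _ _) (min_le_right _ _))
  have hcdp : c ≤ p.dp := le_trans (min_le_right _ _)
    (by rw [hdmin]; exact le_trans (min_le_right _ _) (min_le_left _ _))
  have hcdmp : c ≤ p.dmp := le_trans (min_le_right _ _)
    (by rw [hdmin]; exact le_trans (min_le_right _ _) (min_le_right _ _))
  have hcK : c * K = p.Lam * τmax := by
    rw [hK]; field_simp
  -- derivative of V
  have hVd : ∀ s : ℝ, 0 ≤ s → HasDerivAt
      (fun u => τmax * x u 0 + (x u 1 + x u 2 + x u 3 + x u 4))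
      (τmax * rhs p (x s) 0 + (rhs p (x s) 1 + rhs p (x s) 2 + rhs p (x s) 3 + rhs p (x s) 4)) s :=
    fun s hs => ((hx s hs 0).const_mul τmax).add
      ((((hx s hs 1).add (hx s hs 2)).add (hx s hs 3)).add (hx s hs 4))
  have hDle : ∀ s : ℝ, 0 ≤ s →
      τmax * rhs p (x s) 0 + (rhs p (x s) 1 + rhs p (x s) 2 + rhs p (x s) 3 + rhs p (x s) 4)
        ≤ c * K - c * (τmax * x s 0 + (x s 1 + x s 2 + x s 3 + x s 4)) := by
    intro s hs
    have hB := hnn s hs 0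
    have hN1 := hnn s hs 1
    have hN2 := hnn s hs 2
    have hN3 := hnn s hs 3
    have hN4 := hnn s hs 4
    have hEq : τmax * rhs p (x s) 0
        + (rhs p (x s) 1 + rhs p (x s) 2 + rhs p (x s) 3 + rhs p (x s) 4)
        = p.Lam * τmax - p.d * (τmax * x s 0)
          - τmax * (x s 0 * (p.bs * x s 1 + p.bm * x s 2 + p.bp * x s 3 + p.bmp * x s 4))
          + x s 0 * (p.ts * p.bs * x s 1 + p.tm * p.bm * x s 2
              + p.tp * p.bp * x s 3 + p.tmp * p.bmp * x s 4)
          - (p.ds * x s 1 + p.dm * x s 2 + p.dp * x s 3 + p.dmp * x s 4) := by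
      simp [rhs]; ring
    rw [hEq, hcK]
    have hA : x s 0 * (p.ts * p.bs * x s 1 + p.tm * p.bm * x s 2
          + p.tp * p.bp * x s 3 + p.tmp * p.bmp * x s 4)
        ≤ τmax * (x s 0 * (p.bs * x s 1 + p.bm * x s 2 + p.bp * x s 3 + p.bmp * x s 4)) := by
      linarith only [mul_le_mul_of_nonneg_right hts (mul_nonneg hB (mul_nonneg hbs hN1)),
        mul_le_mul_of_nonneg_right htm (mul_nonneg hB (mul_nonneg hbm hN2)),
        mul_le_mul_of_nonneg_right htp (mul_nonneg hB (mul_nonneg hbp hN3)),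
        mul_le_mul_of_nonneg_right htmp (mul_nonneg hB (mul_nonneg hbmp hN4))]
    linarith only [hA, mul_le_mul_of_nonneg_right hcd (mul_nonneg hτ hB),
      mul_le_mul_of_nonneg_right hcds hN1, mul_le_mul_of_nonneg_right hcdm hN2,
      mul_le_mul_of_nonneg_right hcdp hN3, mul_le_mul_of_nonneg_right hcdmp hN4]
  intro t ht
  rcases eq_or_lt_of_le ht with rfl | htpos
  · exact h0
  · -- Gronwall-type argument with g u = exp (c u) * (V u - K)
    have hcu : ∀ s : ℝ, HasDerivAt (fun u : ℝ => c * u) c s := by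
      intro s; simpa using (hasDerivAt_id s).const_mul c
    have hgd : ∀ s : ℝ, 0 ≤ s → HasDerivAt
        (fun u => Real.exp (c * u) * (τmax * x u 0 + (x u 1 + x u 2 + x u 3 + x u 4) - K))
        (Real.exp (c * s) * c * (τmax * x s 0 + (x s 1 + x s 2 + x s 3 + x s 4) - K)
          + Real.exp (c * s) * (τmax * rhs p (x s) 0
            + (rhs p (x s) 1 + rhs p (x s) 2 + rhs p (x s) 3 + rhs p (x s) 4))) s := by
      intro s hs
      exact ((hcu s).exp).mul ((hVd s hs).sub_const K)
    have hanti : AntitoneOn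
        (fun u => Real.exp (c * u) * (τmax * x u 0 + (x u 1 + x u 2 + x u 3 + x u 4) - K))
        (Set.Icc 0 t) := by
      apply antitoneOn_of_deriv_nonpos (convex_Icc 0 t)
      · exact fun s hs => ((hgd s hs.1).continuousAt).continuousWithinAt
      · intro s hs
        rw [interior_Icc] at hs
        exact ((hgd s hs.1.le).differentiableAt).differentiableWithinAt
      · intro s hs
        rw [interior_Icc] at hs
        rw [(hgd s hs.1.le).deriv]
        have hE := (Real.exp_pos (c * s)).le
        linarith only [mul_le_mul_of_nonneg_left (hDle s hs.1.le) hE]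
    have h2 := hanti (Set.left_mem_Icc.2 ht) (Set.right_mem_Icc.2 ht) ht
    simp only [mul_zero, Real.exp_zero, one_mul] at h2
    have h3 : Real.exp (c * t) * (τmax * x t 0 + (x t 1 + x t 2 + x t 3 + x t 4) - K)
        ≤ Real.exp (c * t) * 0 := by
      rw [mul_zero]; linarith only [h2, h0]
    have h4 := le_of_mul_le_mul_left h3 (Real.exp_pos (c * t))
    linarith only [h4]
end

section
/- If T* = max_{j∈J} T_j < 1, then every nonnegative solution of the within-host bacterial dynamics system converges to the bacteria-free stationary state E⁰ = (B₀, 0, 0, 0, 0): the total bacterial population N(t) = N_s(t)+N_m(t)+N_p(t)+N_{m.p}(t) tends to 0 and B(t) tends to B₀ as t → ∞. -/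
/-!
Consumption only removes nutrient, so `(B - B₀)' ≤ -d (B - B₀)` and eventually `B < b` for every
`b > B₀`. If all thresholds `T_j` are below 1, some `b > B₀` still satisfies `b τ_j β_j < d_j` for
every class `j`. Mutation, segregation and horizontal gene transfer only move bacteria between
classes, so they cancel in the total `N`, and once `B < b` we get `N' ≤ -c N` with `c > 0`, hence
`N → 0`. Finally `(B - B₀)' = -d (B - B₀) - B Σ β_j N_j`, where the forcing term tends to 0,
so `B → B₀`.
-/

open Filter Set Matrix

open Topology

theorem le_of_hasDerivAt_le_neg_mul_add {f f' : ℝ → ℝ} {k ε a : ℝ} (hk : k ≠ 0)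
    (hf : ∀ t ≥ a, HasDerivAt f (f' t) t) (hf' : ∀ t ≥ a, f' t ≤ -k * f t + ε) :
    ∀ t ≥ a, f t ≤ (f a - ε / k) * Real.exp (-k * (t - a)) + ε / k := by
  intro t ht
  have hle := le_gronwallBound_of_liminf_deriv_right_le (a := a) (b := t)
    (fun s hs => (hf s hs.1).continuousAt.continuousWithinAt)
    (fun s hs r hr => by
      simpa [slope_def_field, div_eq_inv_mul] using
        ((hf s hs.1).hasDerivWithinAt (s := Ici s)).liminf_right_slope_le hr)
    le_rfl (fun s hs => hf' s hs.1) t ⟨ht, le_rfl⟩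
  rw [gronwallBound_of_K_ne_0 (neg_ne_zero.2 hk), div_neg] at hle
  linarith

theorem eventually_lt_of_hasDerivAt_le_neg_mul_add {f f' r : ℝ → ℝ} {k b : ℝ} (hk : 0 < k)
    (hb : 0 < b) (hf : ∀ᶠ t in atTop, HasDerivAt f (f' t) t)
    (hf' : ∀ᶠ t in atTop, f' t ≤ -k * f t + r t) (hr : Tendsto r atTop (𝓝 0)) :
    ∀ᶠ t in atTop, f t < b := by
  have hkb : 0 < k * (b / 2) := by positivity
  obtain ⟨a, ha⟩ := eventually_atTop.1
    (hf.and (hf'.and (hr.eventually (eventually_le_nhds hkb))))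
  have hbound := le_of_hasDerivAt_le_neg_mul_add (ε := k * (b / 2)) hk.ne'
    (fun t ht => (ha t ht).1) (fun t ht => (ha t ht).2.1.trans (by linarith [(ha t ht).2.2]))
  have hdecay : Tendsto (fun t => (f a - b / 2) * Real.exp (-k * (t - a))) atTop (𝓝 0) := by
    have hlin : Tendsto (fun t => -k * (t - a)) atTop atBot :=
      (tendsto_atTop_add_const_right _ (-a) tendsto_id).const_mul_atTop_of_neg (by linarith)
    simpa using (Real.tendsto_exp_atBot.comp hlin).const_mul (f a - b / 2)
  filter_upwards [eventually_ge_atTop a, hdecay.eventually (gt_mem_nhds (half_pos hb))]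
    with t ht hsmall
  have := hbound t ht
  rw [mul_div_cancel_left₀ _ hk.ne'] at this
  linarith

theorem tendsto_zero_of_hasDerivAt_eq_neg_mul_add {f f' r : ℝ → ℝ} {k : ℝ} (hk : 0 < k)
    (hf : ∀ᶠ t in atTop, HasDerivAt f (f' t) t) (hf' : ∀ᶠ t in atTop, f' t = -k * f t + r t)
    (hr : Tendsto r atTop (𝓝 0)) : Tendsto f atTop (𝓝 0) := by
  refine tendsto_order.2 ⟨fun a ha => ?_, fun b hb =>
    eventually_lt_of_hasDerivAt_le_neg_mul_add hk hb hf (hf'.mono fun t h => h.le) hr⟩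
  have hneg := eventually_lt_of_hasDerivAt_le_neg_mul_add (f := -f) (f' := -f')
    (r := fun t => -r t) hk (neg_pos.2 ha) (hf.mono fun t h => h.neg)
    (hf'.mono fun t h => by simp [h]) (by simpa using hr.neg)
  exact hneg.mono fun t h => by rw [Pi.neg_apply] at h; linarith

theorem tendsto_zero_of_nonneg_of_hasDerivAt_le_neg_mul {f f' : ℝ → ℝ} {k : ℝ} (hk : 0 < k)
    (hf₀ : ∀ᶠ t in atTop, 0 ≤ f t) (hf : ∀ᶠ t in atTop, HasDerivAt f (f' t) t)
    (hf' : ∀ᶠ t in atTop, f' t ≤ -k * f t) : Tendsto f atTop (𝓝 0) :=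
  tendsto_order.2 ⟨fun _ ha => hf₀.mono fun _ h => ha.trans_le h, fun _ hb =>
    eventually_lt_of_hasDerivAt_le_neg_mul_add (r := 0) hk hb hf
      (hf'.mono fun _ h => by simpa using h) tendsto_const_nhds⟩

def totalBacteria (y : Fin 5 → ℝ) : ℝ := y 1 + y 2 + y 3 + y 4

theorem totalBacteria_nonneg {y : Fin 5 → ℝ} (hy : ∀ i, 0 ≤ y i) : 0 ≤ totalBacteria y := by
  unfold totalBacteria; linarith [hy 1, hy 2, hy 3, hy 4]

namespace ModelParams

variable (p : ModelParams)

def consumption (y : Fin 5 → ℝ) : ℝ := p.bs * y 1 + p.bm * y 2 + p.bp * y 3 + p.bmp * y 4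

def netGrowth (y : Fin 5 → ℝ) : ℝ :=
  (p.ts * p.bs * y 0 - p.ds) * y 1 + (p.tm * p.bm * y 0 - p.dm) * y 2
    + (p.tp * p.bp * y 0 - p.dp) * y 3 + (p.tmp * p.bmp * y 0 - p.dmp) * y 4

def growthMargin (b : ℝ) : ℝ :=
  min (min (p.ds - b * p.ts * p.bs) (p.dm - b * p.tm * p.bm))
    (min (p.dp - b * p.tp * p.bp) (p.dmp - b * p.tmp * p.bmp))

theorem totalBacteria_rhs (y : Fin 5 → ℝ) : totalBacteria (rhs p y) = p.netGrowth y := by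
  simp only [totalBacteria, rhs, netGrowth, Matrix.cons_val]
  ring

variable {p}

theorem consumption_nonneg (hβs : 0 ≤ p.bs) (hβm : 0 ≤ p.bm) (hβp : 0 ≤ p.bp) (hβmp : 0 ≤ p.bmp)
    {y : Fin 5 → ℝ} (hy : ∀ i, 0 ≤ y i) : 0 ≤ p.consumption y := by
  unfold consumption
  have := hy 1; have := hy 2; have := hy 3; have := hy 4
  positivity

theorem consumption_le (hβs : 0 ≤ p.bs) (hβm : 0 ≤ p.bm) (hβp : 0 ≤ p.bp) (hβmp : 0 ≤ p.bmp)
    {y : Fin 5 → ℝ} (hy : ∀ i, 0 ≤ y i) :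
    p.consumption y ≤ (p.bs + p.bm + p.bp + p.bmp) * totalBacteria y := by
  unfold consumption totalBacteria
  nlinarith [hy 1, hy 2, hy 3, hy 4]

theorem netGrowth_le (hs : 0 ≤ p.ts * p.bs) (hm : 0 ≤ p.tm * p.bm) (hp : 0 ≤ p.tp * p.bp)
    (hmp : 0 ≤ p.tmp * p.bmp) {y : Fin 5 → ℝ} (hy : ∀ i, 0 ≤ y i) {b : ℝ} (hb : y 0 ≤ b) :
    p.netGrowth y ≤ -p.growthMargin b * totalBacteria y := by
  have term : ∀ {c : ℝ} (e : ℝ) (i : Fin 5), 0 ≤ c → p.growthMargin b ≤ e - b * c →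
      (c * y 0 - e) * y i ≤ -p.growthMargin b * y i := fun e i hc he =>
    mul_le_mul_of_nonneg_right (by nlinarith) (hy i)
  obtain ⟨⟨h1, h2⟩, h3, h4⟩ := le_min_iff.1 (le_refl (p.growthMargin b)) |>.imp
    le_min_iff.1 le_min_iff.1
  have := term p.ds 1 hs (by linarith); have := term p.dm 2 hm (by linarith)
  have := term p.dp 3 hp (by linarith); have := term p.dmp 4 hmp (by linarith)
  unfold netGrowth totalBacteria
  linarith

theorem continuous_growthMargin : Continuous p.growthMargin := by
  unfold growthMargin; fun_prop

theorem growthMargin_pos {B0 : ℝ} (hds : 0 < p.ds) (hdm : 0 < p.dm) (hdp : 0 < p.dp)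
    (hdmp : 0 < p.dmp)
    (h : max (max (B0 * p.ts * p.bs / p.ds) (B0 * p.tm * p.bm / p.dm))
      (max (B0 * p.tp * p.bp / p.dp) (B0 * p.tmp * p.bmp / p.dmp)) < 1) :
    0 < p.growthMargin B0 := by
  simp only [max_lt_iff, div_lt_one hds, div_lt_one hdm, div_lt_one hdp, div_lt_one hdmp] at h
  simp only [growthMargin, lt_min_iff, sub_pos]
  exact ⟨⟨h.1.1, h.1.2⟩, h.2.1, h.2.2⟩

theorem exists_gt_growthMargin_pos {B0 : ℝ} (h : 0 < p.growthMargin B0) :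
    ∃ b > B0, 0 < p.growthMargin b :=
  (((continuous_growthMargin.tendsto B0).eventually (lt_mem_nhds h)).filter_mono
    nhdsWithin_le_nhds |>.and (self_mem_nhdsWithin (s := Ioi B0))).exists.imp fun _ h => ⟨h.2, h.1⟩

theorem tendsto_mul_consumption_zero (hβs : 0 ≤ p.bs) (hβm : 0 ≤ p.bm) (hβp : 0 ≤ p.bp)
    (hβmp : 0 ≤ p.bmp) {x : ℝ → Fin 5 → ℝ} {b : ℝ} (hx : ∀ᶠ t in atTop, ∀ i, 0 ≤ x t i)
    (hxb : ∀ᶠ t in atTop, x t 0 ≤ b) (hN : Tendsto (fun t => totalBacteria (x t)) atTop (𝓝 0)) :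
    Tendsto (fun t => x t 0 * p.consumption (x t)) atTop (𝓝 0) := by
  have hC := fun t (h : ∀ i, 0 ≤ x t i) => consumption_nonneg hβs hβm hβp hβmp h
  refine tendsto_of_tendsto_of_tendsto_of_le_of_le' tendsto_const_nhds
    (by simpa using (hN.const_mul (p.bs + p.bm + p.bp + p.bmp)).const_mul b)
    (hx.mono fun t h => mul_nonneg (h 0) (hC t h)) ?_
  filter_upwards [hx, hxb] with t h htb
  exact mul_le_mul htb (consumption_le hβs hβm hβp hβmp h) (hC t h) ((h 0).trans htb)

end ModelParams

namespace IsSolution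

variable {p : ModelParams} {x : ℝ → Fin 5 → ℝ}

theorem hasDerivAt_nutrient_sub (hx : IsSolution p x) {B0 : ℝ} (hB0 : p.Lam = p.d * B0) {t : ℝ}
    (ht : 0 ≤ t) : HasDerivAt (fun s => x s 0 - B0)
      (-p.d * (x t 0 - B0) + -(x t 0 * p.consumption (x t))) t :=
  ((hx t ht 0).sub_const B0).congr_deriv <| by
    simp only [rhs, ModelParams.consumption, Matrix.cons_val_zero, hB0]
    ring

theorem hasDerivAt_totalBacteria (hx : IsSolution p x) {t : ℝ} (ht : 0 ≤ t) :
    HasDerivAt (fun s => totalBacteria (x s)) (p.netGrowth (x t)) t := by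
  rw [← p.totalBacteria_rhs]
  exact (((hx t ht 1).add (hx t ht 2)).add (hx t ht 3)).add (hx t ht 4)

end IsSolution

/-- If `T* = max_j T_j < 1` (where `T_j = B₀ τ_j β_j / d_j`,
`B₀ = Λ/d`), then along every nonnegative solution `N(t) → 0` and `B(t) → B₀`
as `t → ∞`: the bacteria-free state `E⁰ = (B₀,0,0,0,0)` is globally
asymptotically attractive. -/
theorem extinction_of_bacteria
    (p : ModelParams) (hp : p.Valid)
    (B0 Tstar : ℝ) (hB0 : B0 = p.Lam / p.d)
    (hT : Tstar = max (max (B0 * p.ts * p.bs / p.ds) (B0 * p.tm * p.bm / p.dm))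
                      (max (B0 * p.tp * p.bp / p.dp) (B0 * p.tmp * p.bmp / p.dmp)))
    (hTlt : Tstar < 1)
    (x : ℝ → Fin 5 → ℝ) (hx : IsSolution p x)
    (hnn : ∀ t : ℝ, 0 ≤ t → ∀ i, 0 ≤ x t i) :
    Filter.Tendsto (fun t => x t 1 + x t 2 + x t 3 + x t 4) Filter.atTop (nhds 0) ∧
    Filter.Tendsto (fun t => x t 0) Filter.atTop (nhds B0) := by
  obtain ⟨-, hd, hds, hdm, hdp, hdmp, hbs, hbm, hbp, hbmp, hts, htm, htp, htmp, -⟩ := hp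
  have hLam : p.Lam = p.d * B0 := by rw [hB0, mul_div_cancel₀ _ hd.ne']
  have hpos : ∀ᶠ t : ℝ in atTop, 0 ≤ t := eventually_ge_atTop 0
  have hxnn : ∀ᶠ t in atTop, ∀ i, 0 ≤ x t i := hpos.mono hnn
  have hB := hpos.mono fun t ht => hx.hasDerivAt_nutrient_sub hLam ht
  obtain ⟨b, hB0b, hb⟩ := ModelParams.exists_gt_growthMargin_pos
    (ModelParams.growthMargin_pos hds hdm hdp hdmp (hT ▸ hTlt))
  have hBb : ∀ᶠ t in atTop, x t 0 < b := by
    have := eventually_lt_of_hasDerivAt_le_neg_mul_add (r := 0) hd (sub_pos.2 hB0b) hB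
      (hxnn.mono fun t h => by
        have := mul_nonneg (h 0) (ModelParams.consumption_nonneg hbs hbm hbp hbmp h)
        simp only [Pi.zero_apply]; linarith)
      tendsto_const_nhds
    exact this.mono fun t h => by linarith
  have hN : Tendsto (fun t => totalBacteria (x t)) atTop (𝓝 0) :=
    tendsto_zero_of_nonneg_of_hasDerivAt_le_neg_mul hb (hxnn.mono fun t => totalBacteria_nonneg)
      (hpos.mono fun t ht => hx.hasDerivAt_totalBacteria ht)
      ((hxnn.and hBb).mono fun t h => ModelParams.netGrowth_le (mul_nonneg hts hbs)
        (mul_nonneg htm hbm) (mul_nonneg htp hbp) (mul_nonneg htmp hbmp) h.1 h.2.le)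
  have hBC := ModelParams.tendsto_mul_consumption_zero hbs hbm hbp hbmp hxnn
    (hBb.mono fun t h => h.le) hN
  have hB0lim := tendsto_zero_of_hasDerivAt_eq_neg_mul_add hd hB (.of_forall fun t => rfl)
    (by simpa using hBC.neg)
  exact ⟨hN, by simpa using hB0lim.add_const B0⟩
end

section
/- Fix Λ, d, d_j > 0, τ_jβ_j > 0 for all j ∈ J, and θ ∈ (0,1), and assume max(T_s, T_m, (1−θ)T_p, (1−θ)T_{m.p}) ≠ 1. Let J⁰ be the 4×4 block upper-triangular matrix [[B₀G−D, B₀L_p],[0, B₀(G_p−L_p)−D_p]], the linearization of the bacterial equations at the bacteria-free stationary state E⁰ = (B₀,0,0,0,0). Then there exists ε₀ > 0 such that whenever all mutation ratios ε_s, ε_m, ε_p, ε_{m.p} lie in (0, ε₀): (a) if max(T_s, T_m, (1−θ)T_p, (1−θ)T_{m.p}) < 1 (equivalently R* = max_j R_j < 1 for such small ratios), then every eigenvalue of J⁰ has negative real part, so E⁰ is locally asymptotically stable; (b) if max(T_s, T_m, (1−θ)T_p, (1−θ)T_{m.p}) > 1 (equivalently R* > 1), then J⁰ has an eigenvalue with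 positive real part, so E⁰ is unstable. -/
open Filter Set Matrix

/-- The linearization `J⁰ = [[B₀G−D, B₀L_p],[0, B₀(G_p−L_p)−D_p]]` of the bacterial
equations at the bacteria-free stationary state `E⁰ = (B₀,0,0,0,0)`. -/
noncomputable def J0 (B0 ds dm dp dmp bs bm bp bmp ts tm tp tmp es em ep emp th : ℝ) :
    Matrix (Fin 4) (Fin 4) ℝ :=
  !![B0 * (ts * bs * (1 - es)) - ds, B0 * (em * tm * bm), B0 * (th * tp * bp), 0;
     B0 * (es * ts * bs), B0 * (tm * bm * (1 - em)) - dm, 0, B0 * (th * tmp * bmp);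
     0, 0, B0 * (tp * bp * (1 - ep * (1 - th)) - th * tp * bp) - dp,
       B0 * (emp * (1 - th) * tmp * bmp);
     0, 0, B0 * (ep * (1 - th) * tp * bp),
       B0 * (tmp * bmp * (1 - emp * (1 - th)) - th * tmp * bmp) - dmp]

/-!
`J⁰` is block upper triangular, so its spectrum is the union of the spectra of its two
diagonal blocks, both of the form `[[a(1-e₁) - d₁, e₂ b], [e₁ a, b(1-e₂) - d₂]]` with
`a, b > 0` and mutation ratios `e₁, e₂ ≥ 0`. If `a < d₁` and `b < d₂`, the block has
negative trace and positive determinant `(d₁-a)(d₂-b) + (d₁-a) b e₂ + (d₂-b) a e₁`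
whatever the mutation ratios, so both eigenvalues lie in the open left half-plane.
If `d₁ < a`, then for `e₁ < 1 - d₁/a` the first diagonal entry is positive and the
off-diagonal product is nonnegative, so the larger real root of the characteristic
polynomial is positive.
-/

lemma re_neg_of_sq_add_mul_add_eq_zero {p q : ℝ} (hp : 0 < p) (hq : 0 < q) {z : ℂ}
    (hz : z ^ 2 + p * z + q = 0) : z.re < 0 := by
  have hre : z.re ^ 2 - z.im ^ 2 + p * z.re + q = 0 := by
    have := congrArg Complex.re hz
    simp only [Complex.add_re, Complex.mul_re, pow_two, Complex.ofReal_re, Complex.ofReal_im,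
      Complex.zero_re] at this
    linarith
  have him : z.im * (2 * z.re + p) = 0 := by
    have := congrArg Complex.im hz
    simp only [Complex.add_im, Complex.mul_im, pow_two, Complex.ofReal_re, Complex.ofReal_im,
      Complex.zero_im] at this
    linarith
  by_contra! h
  rcases mul_eq_zero.mp him with h0 | h0 <;> nlinarith

lemma re_neg_of_sub_mul_sub_eq {α δ κ : ℝ} (hα : α < 0) (hδ : δ < 0) (hκ : κ < α * δ)
    {z : ℂ} (hz : (z - α) * (z - δ) = κ) : z.re < 0 :=
  re_neg_of_sq_add_mul_add_eq_zero (p := -(α + δ)) (q := α * δ - κ) (by linarith)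
    (by linarith) (by push_cast; linear_combination hz)

lemma exists_pos_sub_mul_sub_eq {α δ κ : ℝ} (hκ : 0 ≤ κ) (h : 0 < α ∨ 0 < δ) :
    ∃ r : ℝ, 0 < r ∧ (r - α) * (r - δ) = κ := by
  set s := √(((α - δ) / 2) ^ 2 + κ)
  have hs : s ^ 2 = ((α - δ) / 2) ^ 2 + κ := Real.sq_sqrt (by positivity)
  have habs : |(α - δ) / 2| ≤ s := Real.abs_le_sqrt (by linarith)
  refine ⟨(α + δ) / 2 + s, ?_, by linear_combination hs⟩
  rcases h with h | h
  · linarith [le_abs_self ((α - δ) / 2)]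
  · linarith [neg_abs_le ((α - δ) / 2)]

lemma det_smul_one_sub_blockTriangular (a b u v c e w x f g h k z : ℂ) :
    (z • (1 : Matrix (Fin 4) (Fin 4) ℂ) -
        !![a, b, u, v; c, e, w, x; 0, 0, f, g; 0, 0, h, k]).det
      = ((z - a) * (z - e) - b * c) * ((z - f) * (z - k) - g * h) := by
  have hm : z • (1 : Matrix (Fin 4) (Fin 4) ℂ) -
        !![a, b, u, v; c, e, w, x; 0, 0, f, g; 0, 0, h, k] =
      !![z - a, -b, -u, -v; -c, z - e, -w, -x; 0, 0, z - f, -g; 0, 0, -h, z - k] := by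
    ext i j
    fin_cases i <;> fin_cases j <;> simp
  rw [hm]
  simp [Matrix.det_succ_row_zero, Fin.sum_univ_succ, Fin.succAbove]
  ring

lemma mem_spectrum_iff_of_blockTriangular (a b u v c e w x f g h k z : ℂ) :
    z ∈ spectrum ℂ !![a, b, u, v; c, e, w, x; 0, 0, f, g; 0, 0, h, k] ↔
      (z - a) * (z - e) - b * c = 0 ∨ (z - f) * (z - k) - g * h = 0 := by
  rw [spectrum.mem_iff, Matrix.isUnit_iff_isUnit_det, isUnit_iff_ne_zero, not_ne_iff,
    Algebra.algebraMap_eq_smul_one, det_smul_one_sub_blockTriangular, mul_eq_zero]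

/-- `det (z - A)` for the mutation block
`A = [[a(1-e₁) - d₁, e₂ b], [e₁ a, b(1-e₂) - d₂]]`.
The diagonal blocks of `J⁰` are mutation blocks with `(a, b) = B₀ (τ_s β_s, τ_m β_m)` and
`(a, b) = (1-θ) B₀ (τ_p β_p, τ_{m.p} β_{m.p})`. -/
def mutationDet (a b d₁ d₂ e₁ e₂ : ℝ) (z : ℂ) : ℂ :=
  (z - ↑(a * (1 - e₁) - d₁)) * (z - ↑(b * (1 - e₂) - d₂)) - ↑(e₁ * e₂ * a * b)

lemma re_neg_of_mutationDet_eq_zero {a b d₁ d₂ e₁ e₂ : ℝ} (ha : 0 ≤ a) (hb : 0 ≤ b)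
    (had : a < d₁) (hbd : b < d₂) (he₁ : 0 ≤ e₁) (he₂ : 0 ≤ e₂) {z : ℂ}
    (hz : mutationDet a b d₁ d₂ e₁ e₂ z = 0) : z.re < 0 := by
  have hdet : (a * (1 - e₁) - d₁) * (b * (1 - e₂) - d₂) - e₁ * e₂ * a * b
      = (d₁ - a) * (d₂ - b) + (d₁ - a) * b * e₂ + (d₂ - b) * a * e₁ := by ring
  have h₁ : 0 < (d₁ - a) * (d₂ - b) := mul_pos (by linarith) (by linarith)
  have h₂ : 0 ≤ (d₁ - a) * b * e₂ := by have := sub_pos.2 had; positivity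
  have h₃ : 0 ≤ (d₂ - b) * a * e₁ := by have := sub_pos.2 hbd; positivity
  exact re_neg_of_sub_mul_sub_eq (by nlinarith) (by nlinarith) (by linarith)
    (sub_eq_zero.mp hz)

lemma exists_pos_root_mutationDet {a b d₁ d₂ : ℝ} (ha : 0 < a) (hb : 0 < b)
    (h : d₁ < a ∨ d₂ < b) :
    ∃ ε₀ : ℝ, 0 < ε₀ ∧ ∀ e₁ ∈ Ico 0 ε₀, ∀ e₂ ∈ Ico 0 ε₀,
      ∃ r : ℝ, 0 < r ∧ mutationDet a b d₁ d₂ e₁ e₂ r = 0 := by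
  suffices ∃ ε₀ : ℝ, 0 < ε₀ ∧ ∀ e₁ ∈ Ico 0 ε₀, ∀ e₂ ∈ Ico 0 ε₀,
      0 < a * (1 - e₁) - d₁ ∨ 0 < b * (1 - e₂) - d₂ by
    obtain ⟨ε₀, hε₀, hdiag⟩ := this
    refine ⟨ε₀, hε₀, fun e₁ he₁ e₂ he₂ => ?_⟩
    obtain ⟨r, hr, hroot⟩ :=
      exists_pos_sub_mul_sub_eq (κ := e₁ * e₂ * a * b)
        (by have := he₁.1; have := he₂.1; positivity) (hdiag e₁ he₁ e₂ he₂)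
    exact ⟨r, hr, by simp only [mutationDet]; exact_mod_cast sub_eq_zero.mpr hroot⟩
  rcases h with h | h
  · refine ⟨(a - d₁) / a, div_pos (by linarith) ha, fun e₁ he₁ _ _ => Or.inl ?_⟩
    have := (lt_div_iff₀ ha).mp he₁.2
    linarith
  · refine ⟨(b - d₂) / b, div_pos (by linarith) hb, fun _ _ e₂ he₂ => Or.inr ?_⟩
    have := (lt_div_iff₀ hb).mp he₂.2
    linarith

section J0

variable {B0 ds dm dp dmp bs bm bp bmp ts tm tp tmp es em ep emp th : ℝ}

lemma mem_spectrum_J0_iff {z : ℂ} :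
    z ∈ spectrum ℂ ((J0 B0 ds dm dp dmp bs bm bp bmp ts tm tp tmp es em ep emp th).map
        Complex.ofReal) ↔
      mutationDet (B0 * (ts * bs)) (B0 * (tm * bm)) ds dm es em z = 0 ∨
      mutationDet ((1 - th) * (B0 * (tp * bp))) ((1 - th) * (B0 * (tmp * bmp))) dp dmp ep emp z
        = 0 := by
  have hJ : (J0 B0 ds dm dp dmp bs bm bp bmp ts tm tp tmp es em ep emp th).map Complex.ofReal
      = !![↑(B0 * (ts * bs * (1 - es)) - ds), ↑(B0 * (em * tm * bm)),
            ↑(B0 * (th * tp * bp)), 0;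
          ↑(B0 * (es * ts * bs)), ↑(B0 * (tm * bm * (1 - em)) - dm), 0,
            ↑(B0 * (th * tmp * bmp));
          0, 0, ↑(B0 * (tp * bp * (1 - ep * (1 - th)) - th * tp * bp) - dp),
            ↑(B0 * (emp * (1 - th) * tmp * bmp));
          0, 0, ↑(B0 * (ep * (1 - th) * tp * bp)),
            ↑(B0 * (tmp * bmp * (1 - emp * (1 - th)) - th * tmp * bmp) - dmp)] := by
    ext i j
    fin_cases i <;> fin_cases j <;> simp [J0]
  rw [hJ, mem_spectrum_iff_of_blockTriangular]
  simp only [mutationDet]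
  push_cast
  ring_nf

lemma re_neg_of_mem_spectrum_J0 (hs : 0 ≤ B0 * (ts * bs)) (hm : 0 ≤ B0 * (tm * bm))
    (hp : 0 ≤ (1 - th) * (B0 * (tp * bp))) (hmp : 0 ≤ (1 - th) * (B0 * (tmp * bmp)))
    (hds : B0 * (ts * bs) < ds) (hdm : B0 * (tm * bm) < dm)
    (hdp : (1 - th) * (B0 * (tp * bp)) < dp) (hdmp : (1 - th) * (B0 * (tmp * bmp)) < dmp)
    (hes : 0 ≤ es) (hem : 0 ≤ em) (hep : 0 ≤ ep) (hemp : 0 ≤ emp) {z : ℂ}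
    (hz : z ∈ spectrum ℂ ((J0 B0 ds dm dp dmp bs bm bp bmp ts tm tp tmp es em ep emp th).map
        Complex.ofReal)) : z.re < 0 := by
  rcases mem_spectrum_J0_iff.1 hz with hz | hz
  · exact re_neg_of_mutationDet_eq_zero hs hm hds hdm hes hem hz
  · exact re_neg_of_mutationDet_eq_zero hp hmp hdp hdmp hep hemp hz

lemma exists_pos_re_mem_spectrum_J0 (hs : 0 < B0 * (ts * bs)) (hm : 0 < B0 * (tm * bm))
    (hp : 0 < (1 - th) * (B0 * (tp * bp))) (hmp : 0 < (1 - th) * (B0 * (tmp * bmp)))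
    (h : (ds < B0 * (ts * bs) ∨ dm < B0 * (tm * bm)) ∨
      (dp < (1 - th) * (B0 * (tp * bp)) ∨ dmp < (1 - th) * (B0 * (tmp * bmp)))) :
    ∃ ε₀ : ℝ, 0 < ε₀ ∧ ∀ es em ep emp : ℝ,
      es ∈ Ico 0 ε₀ → em ∈ Ico 0 ε₀ → ep ∈ Ico 0 ε₀ → emp ∈ Ico 0 ε₀ →
      ∃ z ∈ spectrum ℂ ((J0 B0 ds dm dp dmp bs bm bp bmp ts tm tp tmp es em ep emp th).map
        Complex.ofReal), 0 < z.re := by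
  rcases h with h | h
  · obtain ⟨ε₀, hε₀, hroot⟩ := exists_pos_root_mutationDet hs hm h
    refine ⟨ε₀, hε₀, fun es em ep emp hes hem _ _ => ?_⟩
    obtain ⟨r, hr, hr0⟩ := hroot es hes em hem
    exact ⟨r, mem_spectrum_J0_iff.2 (Or.inl hr0), by simpa using hr⟩
  · obtain ⟨ε₀, hε₀, hroot⟩ := exists_pos_root_mutationDet hp hmp h
    refine ⟨ε₀, hε₀, fun es em ep emp _ _ hep hemp => ?_⟩
    obtain ⟨r, hr, hr0⟩ := hroot ep hep emp hemp
    exact ⟨r, mem_spectrum_J0_iff.2 (Or.inr hr0), by simpa using hr⟩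

end J0

/-- For small mutation ratios, the bacteria-free stationary state is
locally asymptotically stable (all eigenvalues of `J⁰` have negative real part) when
`max(T_s, T_m, (1−θ)T_p, (1−θ)T_{m.p}) < 1`, and unstable (some eigenvalue of `J⁰` has
positive real part) when this maximum exceeds `1`. -/
theorem E0_stability_threshold
    (Lam d ds dm dp dmp bs bm bp bmp ts tm tp tmp th : ℝ)
    (hLam : 0 < Lam) (hd : 0 < d)
    (hds : 0 < ds) (hdm : 0 < dm) (hdp : 0 < dp) (hdmp : 0 < dmp)
    (hs : 0 < ts * bs) (hm : 0 < tm * bm) (hpp : 0 < tp * bp) (hmp : 0 < tmp * bmp)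
    (hth : th ∈ Set.Ioo (0:ℝ) 1)
    (B0 Ts Tm Tp Tmp : ℝ) (hB0 : B0 = Lam / d)
    (hTs : Ts = B0 * ts * bs / ds) (hTm : Tm = B0 * tm * bm / dm)
    (hTp : Tp = B0 * tp * bp / dp) (hTmp : Tmp = B0 * tmp * bmp / dmp)
    (hne : max (max Ts Tm) (max ((1 - th) * Tp) ((1 - th) * Tmp)) ≠ 1) :
    ∃ ε₀ : ℝ, 0 < ε₀ ∧
      ∀ es em ep emp : ℝ,
        es ∈ Set.Ioo 0 ε₀ → em ∈ Set.Ioo 0 ε₀ → ep ∈ Set.Ioo 0 ε₀ → emp ∈ Set.Ioo 0 ε₀ →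
        ((max (max Ts Tm) (max ((1 - th) * Tp) ((1 - th) * Tmp)) < 1 →
            ∀ z ∈ spectrum ℂ
              ((J0 B0 ds dm dp dmp bs bm bp bmp ts tm tp tmp es em ep emp th).map
                Complex.ofReal), z.re < 0) ∧
         (1 < max (max Ts Tm) (max ((1 - th) * Tp) ((1 - th) * Tmp)) →
            ∃ z ∈ spectrum ℂ
              ((J0 B0 ds dm dp dmp bs bm bp bmp ts tm tp tmp es em ep emp th).map
                Complex.ofReal), 0 < z.re)) := by
  have hB0pos : 0 < B0 := hB0 ▸ div_pos hLam hd
  have hθ : 0 < 1 - th := sub_pos.2 hth.2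
  have has := mul_pos hB0pos hs
  have ham := mul_pos hB0pos hm
  have hap := mul_pos hθ (mul_pos hB0pos hpp)
  have hamp := mul_pos hθ (mul_pos hB0pos hmp)
  rw [show Ts = B0 * (ts * bs) / ds by rw [hTs, mul_assoc],
    show Tm = B0 * (tm * bm) / dm by rw [hTm, mul_assoc],
    show (1 - th) * Tp = (1 - th) * (B0 * (tp * bp)) / dp by rw [hTp]; ring,
    show (1 - th) * Tmp = (1 - th) * (B0 * (tmp * bmp)) / dmp by rw [hTmp]; ring] at hne ⊢
  rcases hne.lt_or_gt with hlt | hgt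
  · have hblock := hlt
    simp only [max_lt_iff, div_lt_one hds, div_lt_one hdm, div_lt_one hdp, div_lt_one hdmp]
      at hblock
    refine ⟨1, one_pos, fun es em ep emp hes hem hep hemp =>
      ⟨fun _ z hz => ?_, fun h => absurd h (lt_asymm hlt)⟩⟩
    exact re_neg_of_mem_spectrum_J0 has.le ham.le hap.le hamp.le hblock.1.1 hblock.1.2
      hblock.2.1 hblock.2.2 hes.1.le hem.1.le hep.1.le hemp.1.le hz
  · have hblock := hgt
    simp only [lt_max_iff, one_lt_div hds, one_lt_div hdm, one_lt_div hdp, one_lt_div hdmp]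
      at hblock
    obtain ⟨ε₀, hε₀, hunstable⟩ := exists_pos_re_mem_spectrum_J0 has ham hap hamp hblock
    refine ⟨ε₀, hε₀, fun es em ep emp hes hem hep hemp =>
      ⟨fun h => absurd h (lt_asymm hgt), fun _ => ?_⟩⟩
    exact hunstable es em ep emp (Ioo_subset_Ico_self hes) (Ioo_subset_Ico_self hem)
      (Ioo_subset_Ico_self hep) (Ioo_subset_Ico_self hemp)
end

section
/- Assume τ_sβ_s > 0, τ_mβ_m > 0, and let r = (1/(2B₀))·{R_s + R_m + [(R_s − R_m)² + 4K_{m→s}K_{s→m}]^{1/2}} (the spectral radius of D⁻¹G). If B₀·r > 1, then setting B* = 1/r, φ₀ = (R_s − R_m + [(R_s − R_m)² + 4K_{m→s}K_{s→m}]^{1/2}, 2K_{s→m}) and (N_s*, N_m*) = [d(B₀r − 1)/(β_s(φ₀)₁ + β_m(φ₀)₂)]·φ₀, the point E*_{s-m} = (B*, N_s*, N_m*, 0, 0) is a stationary state of the within-host bacterial dynamics system (the right-hand side of all five equations vanishes there), and N_s* > 0, N_m* > 0. -/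
open Filter Set Matrix

/-- If `B₀·r(D⁻¹G) > 1`, then
`E*_{s-m} = (B*, N_s*, N_m*, 0, 0)` with `B* = 1/r(D⁻¹G)` and `(N_s*, N_m*)` the
indicated positive multiple of the principal eigenvector `φ₀` is a stationary state
of the system, with `N_s* > 0` and `N_m* > 0`. -/
theorem sensitive_mutant_coexistence_equilibrium
    (p : ModelParams) (hp : p.Valid)
    (hs : 0 < p.ts * p.bs) (hm : 0 < p.tm * p.bm)
    (B0 Rs Rm Ksm Kms r Bstar φ1 φ2 c Nsstar Nmstar : ℝ)
    (hB0 : B0 = p.Lam / p.d)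
    (hRs : Rs = B0 * p.ts * p.bs / p.ds * (1 - p.es))
    (hRm : Rm = B0 * p.tm * p.bm / p.dm * (1 - p.em))
    (hKsm : Ksm = B0 * p.es * p.ts * p.bs / p.dm)
    (hKms : Kms = B0 * p.em * p.tm * p.bm / p.ds)
    (hr : r = (1 / (2 * B0)) * (Rs + Rm + Real.sqrt ((Rs - Rm) ^ 2 + 4 * Kms * Ksm)))
    (hthr : 1 < B0 * r)
    (hφ1 : φ1 = Rs - Rm + Real.sqrt ((Rs - Rm) ^ 2 + 4 * Kms * Ksm))
    (hφ2 : φ2 = 2 * Ksm)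
    (hc : c = p.d * (B0 * r - 1) / (p.bs * φ1 + p.bm * φ2))
    (hBstar : Bstar = 1 / r)
    (hNs : Nsstar = c * φ1) (hNm : Nmstar = c * φ2) :
    (∀ i, rhs p ![Bstar, Nsstar, Nmstar, 0, 0] i = 0) ∧ 0 < Nsstar ∧ 0 < Nmstar := by
  obtain ⟨hLam, hd, hds, hdm, hdp, hdmp, hbs0, hbm0, hbp0, hbmp0,
    hts0, htm0, htp0, htmp0, hes, hem, hep, hemp, hth, hal, haH, hbH, habH⟩ := hp
  have hbs : 0 < p.bs := by
    rcases hbs0.lt_or_eq with h | h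
    · exact h
    · rw [← h, mul_zero] at hs; exact absurd hs (lt_irrefl 0)
  have hts : 0 < p.ts := by
    rcases hts0.lt_or_eq with h | h
    · exact h
    · rw [← h, zero_mul] at hs; exact absurd hs (lt_irrefl 0)
  have hbm : 0 < p.bm := by
    rcases hbm0.lt_or_eq with h | h
    · exact h
    · rw [← h, mul_zero] at hm; exact absurd hm (lt_irrefl 0)
  have htm : 0 < p.tm := by
    rcases htm0.lt_or_eq with h | h
    · exact h
    · rw [← h, zero_mul] at hm; exact absurd hm (lt_irrefl 0)
  have hB0pos : 0 < B0 := by rw [hB0]; positivity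
  have hB0ne : B0 ≠ 0 := ne_of_gt hB0pos
  have hB0Lam : p.d * B0 = p.Lam := by rw [hB0]; field_simp
  have hRspos : 0 < Rs := by rw [hRs]; have : 0 < 1 - p.es := by linarith [hes.2]
                             positivity
  have hRmpos : 0 < Rm := by rw [hRm]; have : 0 < 1 - p.em := by linarith [hem.2]
                             positivity
  have hKsmpos : 0 < Ksm := by rw [hKsm]; have := hes.1; positivity
  have hKmspos : 0 < Kms := by rw [hKms]; have := hem.1; positivity
  set S := Real.sqrt ((Rs - Rm) ^ 2 + 4 * Kms * Ksm) with hSdef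
  have hSnn : (0:ℝ) ≤ (Rs - Rm) ^ 2 + 4 * Kms * Ksm := by positivity
  have hS2 : S ^ 2 = (Rs - Rm) ^ 2 + 4 * Kms * Ksm := Real.sq_sqrt hSnn
  have hSnonneg : 0 ≤ S := Real.sqrt_nonneg _
  have habs : |Rs - Rm| < S := by
    rw [hSdef, ← Real.sqrt_sq_eq_abs]
    exact Real.sqrt_lt_sqrt (sq_nonneg _) (by linarith [mul_pos hKmspos hKsmpos])
  have hφ1pos : 0 < φ1 := by
    rw [hφ1]
    have h1 := neg_abs_le (Rs - Rm)
    linarith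
  have hφ2pos : 0 < φ2 := by rw [hφ2]; positivity
  have hrpos : 0 < r := by
    by_contra h
    push_neg at h
    have : B0 * r ≤ 0 := mul_nonpos_of_nonneg_of_nonpos hB0pos.le h
    linarith
  have hrne : r ≠ 0 := ne_of_gt hrpos
  have hBr : Bstar * r = 1 := by rw [hBstar]; field_simp
  have hlam : 2 * (B0 * r) = Rs + Rm + S := by rw [hr]; field_simp
  have hE1 : Rs * φ1 + Kms * φ2 = (B0 * r) * φ1 := by
    rw [hφ1, hφ2]
    linear_combination (-(Rs - Rm + S) / 2) * hlam + (-(1:ℝ) / 2) * hS2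
  have hE2 : Ksm * φ1 + Rm * φ2 = (B0 * r) * φ2 := by
    rw [hφ1, hφ2]
    linear_combination (-Ksm) * hlam
  have hA : p.ts * p.bs * (1 - p.es) * B0 = Rs * p.ds := by
    rw [hRs]; field_simp
  have hBmI : p.tm * p.bm * (1 - p.em) * B0 = Rm * p.dm := by
    rw [hRm]; field_simp
  have hKsI : p.es * p.ts * p.bs * B0 = Ksm * p.dm := by
    rw [hKsm]; field_simp
  have hKmI : p.em * p.tm * p.bm * B0 = Kms * p.ds := by
    rw [hKms]; field_simp
  have hdenpos : 0 < p.bs * φ1 + p.bm * φ2 := by positivity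
  have hcden : c * (p.bs * φ1 + p.bm * φ2) = p.d * (B0 * r - 1) := by
    rw [hc]; field_simp
  have hcpos : 0 < c := by
    rw [hc]
    apply div_pos (mul_pos hd (by linarith)) hdenpos
  have hNspos : 0 < Nsstar := by rw [hNs]; exact mul_pos hcpos hφ1pos
  have hNmpos : 0 < Nmstar := by rw [hNm]; exact mul_pos hcpos hφ2pos
  have hEq0 : p.Lam - p.d * Bstar - Bstar * (p.bs * Nsstar + p.bm * Nmstar) = 0 := by
    rw [hNs, hNm]
    linear_combination (-Bstar) * hcden + (-(p.d * B0)) * hBr + (-1 : ℝ) * hB0Lam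
  have hEq1 : p.ts * p.bs * (1 - p.es) * Bstar * Nsstar - p.ds * Nsstar
      + p.em * p.tm * p.bm * Bstar * Nmstar = 0 := by
    have key : B0 * (p.ts * p.bs * (1 - p.es) * Bstar * Nsstar - p.ds * Nsstar
        + p.em * p.tm * p.bm * Bstar * Nmstar) = B0 * 0 := by
      rw [hNs, hNm]
      linear_combination (Bstar * c * φ1) * hA + (Bstar * c * φ2) * hKmI
        + (p.ds * c * Bstar) * hE1 + (p.ds * c * B0 * φ1) * hBr
    exact mul_left_cancel₀ hB0ne key
  have hEq2 : p.tm * p.bm * (1 - p.em) * Bstar * Nmstar - p.dm * Nmstar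
      + p.es * p.ts * p.bs * Bstar * Nsstar = 0 := by
    have key : B0 * (p.tm * p.bm * (1 - p.em) * Bstar * Nmstar - p.dm * Nmstar
        + p.es * p.ts * p.bs * Bstar * Nsstar) = B0 * 0 := by
      rw [hNs, hNm]
      linear_combination (Bstar * c * φ2) * hBmI + (Bstar * c * φ1) * hKsI
        + (p.dm * c * Bstar) * hE2 + (p.dm * c * B0 * φ2) * hBr
    exact mul_left_cancel₀ hB0ne key
  refine ⟨?_, hNspos, hNmpos⟩
  intro i
  fin_cases i <;> simp [rhs]
  · linear_combination hEq0
  · linear_combination hEq1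
  · linear_combination hEq2
end

section
/- Assume τ_pβ_p > 0, τ_{m.p}β_{m.p} > 0, ε_p, ε_{m.p} ∈ (0,1) and θ ∈ (0,1). Then the vector φ₀ = (R_p − R_{m.p} + [(R_p − R_{m.p})² + 4K_{m.p→p}K_{p→m.p}]^{1/2}, 2K_{p→m.p}) has both components positive and satisfies D_p⁻¹(G_p−L_p)·φ₀ = r·φ₀, where r = (1/(2B₀))·{R_p + R_{m.p} + [(R_p − R_{m.p})² + 4K_{m.p→p}K_{p→m.p}]^{1/2}}; moreover r is the largest eigenvalue (spectral radius) of D_p⁻¹(G_p−L_p). -/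
/-!
Since `(1 - ε)(1 - θ) = 1 - ε(1 - θ) - θ`, the matrix `D_p⁻¹(G_p − L_p)` is
`B₀⁻¹ · [[R_p, K_{m.p→p}], [K_{p→m.p}, R_{m.p}]]`. Its trace and determinant show that its
characteristic polynomial has the real roots `B₀⁻¹ (R_p + R_{m.p} ± √Δ) / 2`, with
`Δ = (R_p − R_{m.p})² + 4 K_{m.p→p} K_{p→m.p}`, and the larger one
dominates the smaller in absolute value because `R_p + R_{m.p} ≥ 0`. Positivity of the first
component of `φ₀` is `|R_p − R_{m.p}| < √Δ`, which holds because `K_{m.p→p} K_{p→m.p} > 0`.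
-/

open Filter Set Matrix

/-- The matrix `D_p⁻¹(G_p − L_p)`. -/
noncomputable def DpInvGpLp (dp dmp bp bmp tp tmp ep emp th : ℝ) : Matrix (Fin 2) (Fin 2) ℝ :=
  !![(tp * bp * (1 - ep * (1 - th)) - th * tp * bp) / dp,
       emp * (1 - th) * tmp * bmp / dp;
     ep * (1 - th) * tp * bp / dmp,
       (tmp * bmp * (1 - emp * (1 - th)) - th * tmp * bmp) / dmp]

open Polynomial

theorem Real.add_sqrt_sq_add_pos (x : ℝ) {y : ℝ} (hy : 0 < y) : 0 < x + √(x ^ 2 + y) := by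
  have : |x| < √(x ^ 2 + y) := by
    rw [← Real.sqrt_sq_eq_abs]
    exact Real.sqrt_lt_sqrt (sq_nonneg x) (by linarith)
  linarith [neg_abs_le x]

namespace Matrix

theorem charpoly_fin_two_eq_mul {R : Type*} [CommRing R] [Nontrivial R]
    (M : Matrix (Fin 2) (Fin 2) R) {μ ν : R} (htr : M.trace = μ + ν) (hdet : M.det = μ * ν) :
    M.charpoly = (X - C μ) * (X - C ν) := by
  rw [charpoly_fin_two, htr, hdet, C_add, C_mul]
  ring

theorem mem_spectrum_map_iff_of_charpoly_eq_mul {K L n : Type*} [Field K] [Field L]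
    [Fintype n] [DecidableEq n] (f : K →+* L) (M : Matrix n n K) {μ ν : K}
    (h : M.charpoly = (X - C μ) * (X - C ν)) (z : L) :
    z ∈ spectrum L (M.map f) ↔ z = f μ ∨ z = f ν := by
  simp [mem_spectrum_iff_isRoot_charpoly, charpoly_map, h, sub_eq_zero]

section FinTwo

variable {K : Type*} [Field K] [CharZero K] {a b c e s : K}

theorem charpoly_smul_fin_two (hs : s ^ 2 = (a - e) ^ 2 + 4 * b * c) (k : K) :
    (k • !![a, b; c, e]).charpoly
      = (X - C (k * ((a + e + s) / 2))) * (X - C (k * ((a + e - s) / 2))) := by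
  apply charpoly_fin_two_eq_mul
  · rw [trace_smul, trace_fin_two_of, smul_eq_mul]
    ring
  · rw [det_smul, det_fin_two_of, Fintype.card_fin]
    linear_combination (k ^ 2 / 4) * hs

theorem fin_two_mulVec_eq_smul (hs : s ^ 2 = (a - e) ^ 2 + 4 * b * c) :
    !![a, b; c, e] *ᵥ ![a - e + s, 2 * c] = ((a + e + s) / 2) • ![a - e + s, 2 * c] := by
  ext i
  fin_cases i <;>
    simp only [Fin.zero_eta, Fin.mk_one, Fin.isValue, mulVec_cons, mulVec_empty, add_zero,
      Pi.add_apply, Pi.smul_apply, Function.comp_apply, cons_val_zero, cons_val_one,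
      cons_val_fin_one, head_cons, tail_cons, smul_eq_mul]
  · linear_combination (-1 / 2 : K) * hs
  · ring

end FinTwo

theorem perron_eigenpair_smul_fin_two {k a b c e : ℝ} (hk : 0 ≤ k) (ha : 0 ≤ a)
    (he : 0 ≤ e) (hb : 0 < b) (hc : 0 < c) :
    (0 < a - e + √((a - e) ^ 2 + 4 * b * c) ∧ 0 < 2 * c) ∧
    (k • !![a, b; c, e]) *ᵥ ![a - e + √((a - e) ^ 2 + 4 * b * c), 2 * c]
      = (k * ((a + e + √((a - e) ^ 2 + 4 * b * c)) / 2)) •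
          ![a - e + √((a - e) ^ 2 + 4 * b * c), 2 * c] ∧
    ((k * ((a + e + √((a - e) ^ 2 + 4 * b * c)) / 2) : ℝ) : ℂ)
      ∈ spectrum ℂ ((k • !![a, b; c, e]).map Complex.ofReal) ∧
    ∀ z ∈ spectrum ℂ ((k • !![a, b; c, e]).map Complex.ofReal),
      ‖z‖ ≤ k * ((a + e + √((a - e) ^ 2 + 4 * b * c)) / 2) := by
  set s := √((a - e) ^ 2 + 4 * b * c)
  have hs0 : 0 ≤ s := Real.sqrt_nonneg _
  have hs : s ^ 2 = (a - e) ^ 2 + 4 * b * c := Real.sq_sqrt (by positivity)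
  have hspec := mem_spectrum_map_iff_of_charpoly_eq_mul Complex.ofRealHom _
    (charpoly_smul_fin_two hs k)
  refine ⟨⟨Real.add_sqrt_sq_add_pos _ (by positivity), by positivity⟩, ?_,
    (hspec _).2 (Or.inl rfl), fun z hz => ?_⟩
  · rw [smul_mulVec, fin_two_mulVec_eq_smul hs, smul_smul]
  rcases (hspec z).1 hz with rfl | rfl <;>
  · rw [Complex.ofRealHom_eq_coe, Complex.norm_real, Real.norm_eq_abs, abs_mul, abs_of_nonneg hk]
    gcongr
    exact abs_le.2 ⟨by linarith, by linarith⟩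

end Matrix

theorem DpInvGpLp_eq_inv_smul {B0 : ℝ} (hB0 : B0 ≠ 0) (dp dmp bp bmp tp tmp ep emp th : ℝ) :
    DpInvGpLp dp dmp bp bmp tp tmp ep emp th
      = B0⁻¹ • !![B0 * tp * bp / dp * (1 - ep) * (1 - th),
                    B0 * emp * (1 - th) * tmp * bmp / dp;
                  B0 * ep * (1 - th) * tp * bp / dmp,
                    B0 * tmp * bmp / dmp * (1 - emp) * (1 - th)] := by
  ext i j
  fin_cases i <;> fin_cases j <;>
    simp only [DpInvGpLp, Fin.zero_eta, Fin.mk_one, Fin.isValue, of_apply, cons_val',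
      cons_val_zero, cons_val_one, cons_val_fin_one, Matrix.smul_apply, smul_eq_mul] <;>
    field_simp <;> ring

/-- The vector
`φ₀ = (R_p − R_{m.p} + √((R_p − R_{m.p})² + 4K_{m.p→p}K_{p→m.p}), 2K_{p→m.p})` has
positive components and is an eigenvector of `D_p⁻¹(G_p−L_p)` for the eigenvalue
`r = (1/(2B₀))·(R_p + R_{m.p} + √((R_p − R_{m.p})² + 4K_{m.p→p}K_{p→m.p}))`, which is
the largest eigenvalue (spectral radius) of this matrix. -/
theorem principal_eigenpair_plasmid_block
    (Lam d dp dmp bp bmp tp tmp ep emp th : ℝ)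
    (hLam : 0 < Lam) (hd : 0 < d) (hdp : 0 < dp) (hdmp : 0 < dmp)
    (hp : 0 < tp * bp) (hmp : 0 < tmp * bmp)
    (hep : ep ∈ Set.Ioo (0:ℝ) 1) (hemp : emp ∈ Set.Ioo (0:ℝ) 1)
    (hth : th ∈ Set.Ioo (0:ℝ) 1)
    (B0 Rp Rmp Kpmp Kmpp r : ℝ)
    (hB0 : B0 = Lam / d)
    (hRp : Rp = B0 * tp * bp / dp * (1 - ep) * (1 - th))
    (hRmp : Rmp = B0 * tmp * bmp / dmp * (1 - emp) * (1 - th))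
    (hKpmp : Kpmp = B0 * ep * (1 - th) * tp * bp / dmp)
    (hKmpp : Kmpp = B0 * emp * (1 - th) * tmp * bmp / dp)
    (hr : r = (1 / (2 * B0)) * (Rp + Rmp + Real.sqrt ((Rp - Rmp) ^ 2 + 4 * Kmpp * Kpmp))) :
    (0 < Rp - Rmp + Real.sqrt ((Rp - Rmp) ^ 2 + 4 * Kmpp * Kpmp) ∧ 0 < 2 * Kpmp) ∧
    (DpInvGpLp dp dmp bp bmp tp tmp ep emp th).mulVec
        ![Rp - Rmp + Real.sqrt ((Rp - Rmp) ^ 2 + 4 * Kmpp * Kpmp), 2 * Kpmp]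
      = r • ![Rp - Rmp + Real.sqrt ((Rp - Rmp) ^ 2 + 4 * Kmpp * Kpmp), 2 * Kpmp] ∧
    (r : ℂ) ∈ spectrum ℂ ((DpInvGpLp dp dmp bp bmp tp tmp ep emp th).map Complex.ofReal) ∧
    ∀ z ∈ spectrum ℂ ((DpInvGpLp dp dmp bp bmp tp tmp ep emp th).map Complex.ofReal),
      ‖z‖ ≤ r := by
  obtain ⟨hep0, hep1⟩ := hep
  obtain ⟨hemp0, hemp1⟩ := hemp
  have h1ep : 0 < 1 - ep := sub_pos.2 hep1
  have h1emp : 0 < 1 - emp := sub_pos.2 hemp1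
  have h1th : 0 < 1 - th := sub_pos.2 hth.2
  have hB0_pos : 0 < B0 := hB0 ▸ div_pos hLam hd
  have hRp_pos : 0 < Rp := by rw [hRp, mul_assoc B0]; positivity
  have hRmp_pos : 0 < Rmp := by rw [hRmp, mul_assoc B0]; positivity
  have hKpmp_pos : 0 < Kpmp := by rw [hKpmp, mul_assoc _ tp]; positivity
  have hKmpp_pos : 0 < Kmpp := by rw [hKmpp, mul_assoc _ tmp]; positivity
  have hr' : r = B0⁻¹ * ((Rp + Rmp + √((Rp - Rmp) ^ 2 + 4 * Kmpp * Kpmp)) / 2) := by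
    rw [hr]; ring
  rw [DpInvGpLp_eq_inv_smul hB0_pos.ne', ← hRp, ← hRmp, ← hKpmp, ← hKmpp, hr']
  exact perron_eigenpair_smul_fin_two (inv_nonneg.2 hB0_pos.le) hRp_pos.le hRmp_pos.le hKmpp_pos
    hKpmp_pos
end

section
/- Assume τ_sβ_s > 0, τ_mβ_m > 0 and T_s > T_m > 0. For η ∈ (0,1) set ε_s = ε_m = η and define the resistance proportion at the stationary state E*_{s-m} by P_R(η) = 2K_{s→m} / ( R_s − R_m + [(R_s − R_m)² + 4K_{m→s}K_{s→m}]^{1/2} + 2K_{s→m} ), where R_s, R_m, K_{s→m}, K_{m→s} are evaluated at ε_s = ε_m = η. Then lim_{η→0⁺} P_R(η)/η = (d_s/d_m)·T_s/(T_s − T_m). -/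
open Filter Set

/-- Resistance proportion at the stationary state `E*_{s-m}` when both mutation
ratios are set equal to `η`. -/
noncomputable def PRsm (B0 ds dm bs bm ts tm Ts Tm : ℝ) (η : ℝ) : ℝ :=
  2 * (B0 * η * ts * bs / dm) /
    (Ts * (1 - η) - Tm * (1 - η)
      + Real.sqrt ((Ts * (1 - η) - Tm * (1 - η)) ^ 2
          + 4 * (B0 * η * tm * bm / ds) * (B0 * η * ts * bs / dm))
      + 2 * (B0 * η * ts * bs / dm))

/-- When `T_s > T_m > 0` (mutation providing a fitness cost),
`P_R(E*_{s-m})/η → (d_s/d_m)·T_s/(T_s − T_m)` as `η → 0⁺`. -/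
theorem resistance_proportion_fitness_cost
    (Lam d ds dm bs bm ts tm : ℝ)
    (hLam : 0 < Lam) (hd : 0 < d) (hds : 0 < ds) (hdm : 0 < dm)
    (hs : 0 < ts * bs) (hm : 0 < tm * bm)
    (B0 Ts Tm : ℝ) (hB0 : B0 = Lam / d)
    (hTs : Ts = B0 * ts * bs / ds) (hTm : Tm = B0 * tm * bm / dm)
    (hTm0 : 0 < Tm) (hTsm : Tm < Ts) :
    Filter.Tendsto (fun η : ℝ => PRsm B0 ds dm bs bm ts tm Ts Tm η / η)
      (nhdsWithin 0 (Set.Ioi 0)) (nhds (ds / dm * Ts / (Ts - Tm))) := by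
  have hab : B0 * ts * bs = Ts * ds := by rw [hTs]; field_simp
  have hTsTm : 0 < Ts - Tm := sub_pos.mpr hTsm
  set A : ℝ := 2 * (B0 * ts * bs / dm) with hA
  set D : ℝ → ℝ := fun η =>
    Ts * (1 - η) - Tm * (1 - η)
      + Real.sqrt ((Ts * (1 - η) - Tm * (1 - η)) ^ 2
          + 4 * (B0 * η * tm * bm / ds) * (B0 * η * ts * bs / dm))
      + 2 * (B0 * η * ts * bs / dm) with hDdef
  have hcont : Continuous D := by
    apply Continuous.add
    apply Continuous.add
    · fun_prop
    · exact Real.continuous_sqrt.comp (by fun_prop)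
    · fun_prop
  have hD0 : D 0 = 2 * (Ts - Tm) := by
    have : ((Ts * (1 - (0:ℝ)) - Tm * (1 - 0)) ^ 2
          + 4 * (B0 * 0 * tm * bm / ds) * (B0 * 0 * ts * bs / dm)) = (Ts - Tm) ^ 2 := by
      ring
    simp only [hDdef, this, Real.sqrt_sq hTsTm.le]
    ring
  have hlim : Tendsto (fun η => A / D η) (nhdsWithin 0 (Set.Ioi 0))
      (nhds (ds / dm * Ts / (Ts - Tm))) := by
    have h1 : Tendsto D (nhdsWithin 0 (Set.Ioi 0)) (nhds (2 * (Ts - Tm))) := by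
      have := (hcont.tendsto 0).mono_left (nhdsWithin_le_nhds (s := Set.Ioi (0:ℝ)))
      rwa [hD0] at this
    have h2 := (tendsto_const_nhds (x := A)
      (f := nhdsWithin (0:ℝ) (Set.Ioi 0))).div h1 (by positivity)
    have hval : A / (2 * (Ts - Tm)) = ds / dm * Ts / (Ts - Tm) := by
      rw [hA, hab]
      field_simp
    rwa [hval] at h2
  refine hlim.congr' ?_
  filter_upwards [self_mem_nhdsWithin] with η hη
  have hη0 : (η : ℝ) ≠ 0 := ne_of_gt hη
  have gen : ∀ X : ℝ, 2 * (B0 * η * ts * bs / dm) / X / η = A / X := by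
    intro X
    rw [show 2 * (B0 * η * ts * bs / dm) = η * A by rw [hA]; ring,
      div_div, mul_comm X η, mul_div_mul_left A X hη0]
  exact (gen _).symm
end

section
/- Assume τ_sβ_s > 0, τ_mβ_m > 0 and T_m > T_s > 0. For η ∈ (0,1) set ε_s = ε_m = η and define the resistance proportion at the stationary state E*_{s-m} by P_R(η) = 2K_{s→m} / ( R_s − R_m + [(R_s − R_m)² + 4K_{m→s}K_{s→m}]^{1/2} + 2K_{s→m} ), where R_s, R_m, K_{s→m}, K_{m→s} are evaluated at ε_s = ε_m = η. Then lim_{η→0⁺} (1 − P_R(η))/η = [d_m(T_m − T_s)/(4B₀τ_sβ_s)]·( ((T_s + T_m)/(T_s − T_m))² − 1 ). -/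
open Filter Set

/-!
Write `P_R = 2K_{s→m} / (R + √(R² + 4K_{m→s}K_{s→m}) + 2K_{s→m})` with `R = R_s − R_m`.
Rationalising, `1 − P_R = 2K_{m→s} / (2K_{m→s} + √(R² + 4K_{m→s}K_{s→m}) − R)`. Both `K`'s
are `η` times a constant, so after dividing by `η` the right-hand side is continuous in `η`;
at `η = 0` the square root is `|T_s − T_m| = T_m − T_s`, which gives the limit
`d_m T_m / (d_s (T_m − T_s))`, which is the stated constant.
-/

open Topology

noncomputable def resistanceProportion (R Kms Ksm : ℝ) : ℝ :=
  2 * Ksm / (R + √(R ^ 2 + 4 * Kms * Ksm) + 2 * Ksm)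

lemma one_sub_resistanceProportion {R Kms Ksm : ℝ} (hdisc : 0 ≤ R ^ 2 + 4 * Kms * Ksm)
    (hKsm : Ksm ≠ 0) (hE : 2 * Kms + √(R ^ 2 + 4 * Kms * Ksm) - R ≠ 0) :
    1 - resistanceProportion R Kms Ksm = 2 * Kms / (2 * Kms + √(R ^ 2 + 4 * Kms * Ksm) - R) := by
  set S := √(R ^ 2 + 4 * Kms * Ksm)
  have hS : S ^ 2 = R ^ 2 + 4 * Kms * Ksm := Real.sq_sqrt hdisc
  have hD : (R + S + 2 * Ksm) * (S - R) = 2 * Ksm * (2 * Kms + S - R) := by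
    linear_combination hS
  have hD0 : R + S + 2 * Ksm ≠ 0 := by
    rintro h
    rw [h, zero_mul] at hD
    exact mul_ne_zero (mul_ne_zero two_ne_zero hKsm) hE hD.symm
  rw [resistanceProportion, one_sub_div hD0, div_eq_div_iff hD0 hE]
  linear_combination hS

lemma PRsm_eq_resistanceProportion (B0 ds dm bs bm ts tm Ts Tm η : ℝ) :
    PRsm B0 ds dm bs bm ts tm Ts Tm η =
      resistanceProportion ((Ts - Tm) * (1 - η)) (η * (B0 * tm * bm / ds))
        (η * (B0 * ts * bs / dm)) := by
  simp only [PRsm, resistanceProportion]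
  ring_nf

theorem tendsto_one_sub_resistanceProportion_div {r k l : ℝ} (hr : r < 0) (hk : k ≠ 0) :
    Tendsto (fun η => (1 - resistanceProportion (r * (1 - η)) (η * l) (η * k)) / η)
      (𝓝[≠] 0) (𝓝 (l / -r)) := by
  set disc : ℝ → ℝ := fun η => (r * (1 - η)) ^ 2 + 4 * (η * l) * (η * k)
  set E : ℝ → ℝ := fun η => 2 * (η * l) + √(disc η) - r * (1 - η)
  have hE0 : E 0 = -2 * r := by
    simp only [E, disc]
    rw [show (r * (1 - 0)) ^ 2 + 4 * (0 * l) * (0 * k) = (-r) ^ 2 by ring,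
      Real.sqrt_sq (by linarith)]
    ring
  have hdisc : ContinuousAt disc 0 := by fun_prop
  have hE : ContinuousAt E 0 := by fun_prop
  have hlim : Tendsto (fun η => 2 * l / E η) (𝓝 0) (𝓝 (l / -r)) := by
    have h := (tendsto_const_nhds (x := 2 * l)).div hE.tendsto (by rw [hE0]; linarith)
    rwa [hE0, show 2 * l / (-2 * r) = l / -r by field_simp] at h
  have hgood : ∀ᶠ η in 𝓝 0, 0 < disc η ∧ E η ≠ 0 :=
    (continuousAt_const.eventually_lt hdisc (by norm_num [disc]; nlinarith)).and
      (hE.eventually_ne (by rw [hE0]; linarith))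
  refine (hlim.mono_left nhdsWithin_le_nhds).congr' ?_
  filter_upwards [self_mem_nhdsWithin, nhdsWithin_le_nhds hgood] with η (hη : η ≠ 0) ⟨hdη, hEη⟩
  rw [one_sub_resistanceProportion hdη.le (mul_ne_zero hη hk) hEη]
  change 2 * l / E η = 2 * (η * l) / E η / η
  field_simp

theorem resistance_proportion_fitness_benefit_general
    (ds dm bs bm ts tm : ℝ)
    (hds : 0 < ds) (hdm : 0 < dm)
    (B0 Ts Tm : ℝ)
    (hTs : Ts = B0 * ts * bs / ds) (hTm : Tm = B0 * tm * bm / dm)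
    (hTs0 : 0 < Ts) (hTsm : Ts < Tm) :
    Filter.Tendsto (fun η : ℝ => (1 - PRsm B0 ds dm bs bm ts tm Ts Tm η) / η)
      (nhdsWithin 0 (Set.Ioi 0))
      (nhds (dm * (Tm - Ts) / (4 * B0 * ts * bs) * (((Ts + Tm) / (Ts - Tm)) ^ 2 - 1))) := by
  have hBs : B0 * ts * bs = Ts * ds := by rw [hTs]; field_simp
  have hBm : B0 * tm * bm = Tm * dm := by rw [hTm]; field_simp
  have hlim := tendsto_one_sub_resistanceProportion_div (l := B0 * tm * bm / ds)
    (sub_neg.2 hTsm) (show B0 * ts * bs / dm ≠ 0 by rw [hBs]; positivity)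
  have hval : dm * (Tm - Ts) / (4 * B0 * ts * bs) * (((Ts + Tm) / (Ts - Tm)) ^ 2 - 1) =
      B0 * tm * bm / ds / -(Ts - Tm) := by
    have hne : Ts - Tm ≠ 0 := sub_ne_zero.2 hTsm.ne
    rw [show 4 * B0 * ts * bs = 4 * (B0 * ts * bs) by ring, hBs, hBm]
    field_simp
    ring
  simp only [PRsm_eq_resistanceProportion, hval]
  exact hlim.mono_left (nhdsWithin_mono _ fun η hη => ne_of_gt hη)

/-- When `T_m > T_s > 0` (mutation providing a fitness benefit),
`(1 − P_R(E*_{s-m}))/η → (d_m(T_m − T_s)/(4B₀τ_sβ_s))·(((T_s+T_m)/(T_s−T_m))² − 1)`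
as `η → 0⁺`. -/
theorem resistance_proportion_fitness_benefit
    (Lam d ds dm bs bm ts tm : ℝ)
    (hLam : 0 < Lam) (hd : 0 < d) (hds : 0 < ds) (hdm : 0 < dm)
    (hs : 0 < ts * bs) (hm : 0 < tm * bm)
    (B0 Ts Tm : ℝ) (hB0 : B0 = Lam / d)
    (hTs : Ts = B0 * ts * bs / ds) (hTm : Tm = B0 * tm * bm / dm)
    (hTs0 : 0 < Ts) (hTsm : Ts < Tm) :
    Filter.Tendsto (fun η : ℝ => (1 - PRsm B0 ds dm bs bm ts tm Ts Tm η) / η)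
      (nhdsWithin 0 (Set.Ioi 0))
      (nhds (dm * (Tm - Ts) / (4 * B0 * ts * bs) * (((Ts + Tm) / (Ts - Tm)) ^ 2 - 1))) :=
  resistance_proportion_fitness_benefit_general ds dm bs bm ts tm hds hdm B0 Ts Tm hTs hTm hTs0 hTsm
end
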